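/- arXiv:2509.15201 — 15 statements merged into one kernel-verified Lean document; each statement's English description precedes it below -/
import Mathlib

section
/- Let A and N be real symmetric n×n matrices with the same diagonal (N_ii = A_ii for all i) such that both N and N − A have all entries nonnegative. Then A is copositive if and only if the pair (N, A − N̊) is pairwise copositive, where N̊ = N − diag(N) denotes N with its diagonal entries set to zero. -/
open Matrix
open scoped ComplexOrder

noncomputable section

/-- The off-diagonal part of a square matrix (diagonal set to zero). -/
def offd {ι : Type*} [DecidableEq ι] {R : Type*} [Zero R] (M : Matrix ι ι R) : Matrix ι ι R :=
  Matrix.of fun i j => if i = j then 0 else M i j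

/-- A real symmetric matrix is copositive if `⟨x, M x⟩ ≥ 0` for all entrywise nonnegative `x`. -/
def Copositive {ι : Type*} [Fintype ι] (M : Matrix ι ι ℝ) : Prop :=
  ∀ x : ι → ℝ, (∀ i, 0 ≤ x i) → 0 ≤ x ⬝ᵥ (M *ᵥ x)

/-- The pair `(A, B)` is pairwise copositive. -/
def PairCopos {ι : Type*} [Fintype ι] [DecidableEq ι]
    (A : Matrix ι ι ℝ) (B : Matrix ι ι ℂ) : Prop :=
  ∀ v w : ι → ℂ,
    0 ≤ (star (fun i => v i * star (v i)) ⬝ᵥ ((A.map Complex.ofReal) *ᵥ fun i => w i * star (w i))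
        + star (fun i => v i * w i) ⬝ᵥ ((offd B) *ᵥ fun i => v i * w i)).re

/-- `M ∈ SPN`: sum of a real PSD matrix and a symmetric entrywise nonnegative matrix. -/
def SPN {ι : Type*} [Fintype ι] [DecidableEq ι] (M : Matrix ι ι ℝ) : Prop :=
  ∃ P E : Matrix ι ι ℝ, M = P + E ∧ P.PosSemidef ∧ E.IsSymm ∧ ∀ i j, 0 ≤ E i j

/-- The pair `(A, B)` is pairwise decomposable. -/
def PairDecomp {ι : Type*} [Fintype ι] [DecidableEq ι]
    (A : Matrix ι ι ℝ) (B : Matrix ι ι ℂ) : Prop :=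
  ∃ B1 B2 : Matrix ι ι ℂ, B = B1 + B2 ∧ B1.PosSemidef ∧ B2.IsHermitian ∧
    (∀ i, 0 ≤ (B2 i i).re) ∧ ∀ i j, i ≠ j → ‖B2 i j‖ ^ 2 ≤ A i j * A j i


lemma star_mul_star_self (z : ℂ) : star (z * star z) = ((‖z‖ ^ 2 : ℝ) : ℂ) := by
  rw [star_mul', star_star, mul_comm, Complex.star_def, Complex.mul_conj, Complex.sq_norm]

lemma mul_star_self (z : ℂ) : z * star z = ((‖z‖ ^ 2 : ℝ) : ℂ) := by
  rw [Complex.star_def, Complex.mul_conj, Complex.sq_norm]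

lemma expand_re {n : ℕ} (A N : Matrix (Fin n) (Fin n) ℝ) (v w : Fin n → ℂ) :
    (star (fun i => v i * star (v i)) ⬝ᵥ ((N.map Complex.ofReal) *ᵥ fun i => w i * star (w i))
        + star (fun i => v i * w i) ⬝ᵥ ((offd ((A - offd N).map Complex.ofReal)) *ᵥ fun i => v i * w i)).re
    = ∑ i, ∑ j, (N i j * (‖v i‖)^2 * (‖w j‖)^2
        + (if i = j then 0 else (A i j - N i j)) * ((starRingEnd ℂ) (v i * w i) * (v j * w j)).re) := by
  simp only [dotProduct, mulVec, Pi.star_apply, Matrix.map_apply, offd, Matrix.of_apply,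
    Matrix.sub_apply, Complex.add_re, Complex.re_sum, Finset.mul_sum, ← Finset.sum_add_distrib]
  refine Finset.sum_congr rfl fun i _ => Finset.sum_congr rfl fun j _ => ?_
  rw [star_mul_star_self, mul_star_self]
  by_cases hij : i = j
  · simp [hij, ← Complex.ofReal_mul, ← Complex.ofReal_pow, Complex.ofReal_re]
    ring
  · rw [if_neg hij, if_neg hij, if_neg hij,
      show star (v i * w i) * ((((A i j - N i j) : ℝ) : ℂ) * (v j * w j))
        = (((A i j - N i j) : ℝ) : ℂ) * (star (v i * w i) * (v j * w j)) by ring,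
      Complex.re_ofReal_mul]
    simp [← Complex.ofReal_pow, ← Complex.ofReal_mul, Complex.ofReal_re, Complex.star_def]
    ring

lemma quad_eq {n : ℕ} (A N : Matrix (Fin n) (Fin n) ℝ) (hdiag : ∀ i, N i i = A i i)
    (x : Fin n → ℝ) :
    ∑ i, ∑ j, (N i j * x i * x j + (if i = j then 0 else (A i j - N i j)) * (x i * x j))
      = x ⬝ᵥ (A *ᵥ x) := by
  simp only [dotProduct, mulVec, Finset.mul_sum]
  refine Finset.sum_congr rfl fun i _ => Finset.sum_congr rfl fun j _ => ?_
  by_cases hij : i = j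
  · subst hij; rw [if_pos rfl, hdiag i]; ring
  · rw [if_neg hij]; ring


theorem stmt0 {n : ℕ} (A N : Matrix (Fin n) (Fin n) ℝ)
    (hA : A.IsSymm) (hN : N.IsSymm)
    (hdiag : ∀ i, N i i = A i i)
    (hNpos : ∀ i j, 0 ≤ N i j)
    (hNA : ∀ i j, 0 ≤ N i j - A i j) :
    Copositive A ↔ PairCopos N ((A - offd N).map Complex.ofReal) := by
  have hNsymm : ∀ i j, N j i = N i j := fun i j => congrFun (congrFun hN i) j
  constructor
  · intro hcop v w
    rw [expand_re]
    set a : Fin n → ℝ := fun i => ‖v i‖ with ha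
    set b : Fin n → ℝ := fun i => ‖w i‖ with hb
    set x : Fin n → ℝ := fun i => a i * b i with hx
    have hxpos : ∀ i, 0 ≤ x i := fun i => mul_nonneg (norm_nonneg _) (norm_nonneg _)
    -- split the sum
    have hsplit : ∑ i, ∑ j, (N i j * a i ^ 2 * b j ^ 2
          + (if i = j then 0 else (A i j - N i j)) * ((starRingEnd ℂ) (v i * w i) * (v j * w j)).re)
        = (∑ i, ∑ j, N i j * a i ^ 2 * b j ^ 2)
          + ∑ i, ∑ j, (if i = j then 0 else (A i j - N i j)) * ((starRingEnd ℂ) (v i * w i) * (v j * w j)).re := by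
      rw [← Finset.sum_add_distrib]
      exact Finset.sum_congr rfl fun i _ => Finset.sum_add_distrib
    rw [hsplit]
    -- bound part 1
    have hswap : (∑ i, ∑ j, N i j * a i ^ 2 * b j ^ 2) = ∑ i, ∑ j, N i j * a j ^ 2 * b i ^ 2 := by
      rw [Finset.sum_comm]
      exact Finset.sum_congr rfl fun i _ => Finset.sum_congr rfl fun j _ => by rw [hNsymm i j]
    have h1 : (∑ i, ∑ j, N i j * x i * x j) ≤ ∑ i, ∑ j, N i j * a i ^ 2 * b j ^ 2 := by
      have hdouble : (∑ i, ∑ j, 2 * (N i j * x i * x j))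
          ≤ ∑ i, ∑ j, (N i j * a i ^ 2 * b j ^ 2 + N i j * a j ^ 2 * b i ^ 2) := by
        refine Finset.sum_le_sum fun i _ => Finset.sum_le_sum fun j _ => ?_
        have := mul_nonneg (hNpos i j) (sq_nonneg (a i * b j - a j * b i))
        simp only [hx]
        nlinarith [this]
      have e1 : (∑ i, ∑ j, 2 * (N i j * x i * x j)) = 2 * ∑ i, ∑ j, N i j * x i * x j := by
        simp [Finset.mul_sum]
      have e2 : (∑ i, ∑ j, (N i j * a i ^ 2 * b j ^ 2 + N i j * a j ^ 2 * b i ^ 2))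
          = (∑ i, ∑ j, N i j * a i ^ 2 * b j ^ 2) + ∑ i, ∑ j, N i j * a j ^ 2 * b i ^ 2 := by
        rw [← Finset.sum_add_distrib]
        exact Finset.sum_congr rfl fun i _ => Finset.sum_add_distrib
      rw [e1, e2, ← hswap] at hdouble
      linarith
    -- bound part 2
    have h2 : (∑ i, ∑ j, (if i = j then 0 else (A i j - N i j)) * (x i * x j))
        ≤ ∑ i, ∑ j, (if i = j then 0 else (A i j - N i j)) * ((starRingEnd ℂ) (v i * w i) * (v j * w j)).re := by
      refine Finset.sum_le_sum fun i _ => Finset.sum_le_sum fun j _ => ?_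
      by_cases hij : i = j
      · simp [hij]
      · have hc : A i j - N i j ≤ 0 := by linarith [hNA i j]
        have hre : ((starRingEnd ℂ) (v i * w i) * (v j * w j)).re ≤ x i * x j := by
          calc ((starRingEnd ℂ) (v i * w i) * (v j * w j)).re
              ≤ ‖(starRingEnd ℂ) (v i * w i) * (v j * w j)‖ := Complex.re_le_norm _
            _ = x i * x j := by
                simp only [norm_mul, Complex.norm_conj, hx, ha, hb]
        simp only [if_neg hij]
        exact mul_le_mul_of_nonpos_left hre hc
    have hfin := hcop x hxpos
    rw [← quad_eq A N hdiag x] at hfin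
    have hq : ∑ i, ∑ j, (N i j * x i * x j + (if i = j then 0 else (A i j - N i j)) * (x i * x j))
        = (∑ i, ∑ j, N i j * x i * x j)
          + ∑ i, ∑ j, (if i = j then 0 else (A i j - N i j)) * (x i * x j) := by
      rw [← Finset.sum_add_distrib]
      exact Finset.sum_congr rfl fun i _ => Finset.sum_add_distrib
    rw [hq] at hfin
    linarith
  · intro h x hx
    have := h (fun i => ((Real.sqrt (x i) : ℝ) : ℂ)) (fun i => ((Real.sqrt (x i) : ℝ) : ℂ))
    rw [expand_re] at this
    have e : ∑ i, ∑ j, (N i j * (‖((Real.sqrt (x i) : ℝ) : ℂ)‖)^2 * (‖((Real.sqrt (x j) : ℝ) : ℂ)‖)^2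
          + (if i = j then 0 else (A i j - N i j)) *
            ((starRingEnd ℂ) (((Real.sqrt (x i) : ℝ) : ℂ) * ((Real.sqrt (x i) : ℝ) : ℂ))
              * (((Real.sqrt (x j) : ℝ) : ℂ) * ((Real.sqrt (x j) : ℝ) : ℂ))).re)
        = ∑ i, ∑ j, (N i j * x i * x j + (if i = j then 0 else (A i j - N i j)) * (x i * x j)) := by
      refine Finset.sum_congr rfl fun i _ => Finset.sum_congr rfl fun j _ => ?_
      rw [← Complex.ofReal_mul, ← Complex.ofReal_mul, Complex.conj_ofReal, ← Complex.ofReal_mul,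
        Complex.ofReal_re, Real.mul_self_sqrt (hx i), Real.mul_self_sqrt (hx j),
        Complex.norm_real, Complex.norm_real, Real.norm_eq_abs, Real.norm_eq_abs, abs_of_nonneg (Real.sqrt_nonneg _),
        abs_of_nonneg (Real.sqrt_nonneg _), Real.sq_sqrt (hx i), Real.sq_sqrt (hx j)]
    rw [e, quad_eq A N hdiag x] at this
    exact this


end
end

section
/- Let A be a real symmetric n×n matrix such that I − A has all entries nonnegative. Then the pair (diag(A) + J̊, A) is pairwise copositive if and only if the matrix A + J̊ is copositive, where J is the n×n all-ones matrix, J̊ = J − I is J with its diagonal set to zero, and diag(A) is the diagonal matrix whose diagonal entries are those of A. -/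
open Matrix
open scoped ComplexOrder

noncomputable section

lemma key {n : ℕ} (M N : Matrix (Fin n) (Fin n) ℝ) (v w : Fin n → ℂ) :
    (star (fun i => v i * star (v i)) ⬝ᵥ ((M.map Complex.ofReal) *ᵥ fun i => w i * star (w i))
      + star (fun i => v i * w i) ⬝ᵥ ((N.map Complex.ofReal) *ᵥ fun i => v i * w i)).re
    = ∑ i, ∑ j, (Complex.normSq (v i) * M i j * Complex.normSq (w j)
        + N i j * ((starRingEnd ℂ) (v i * w i) * (v j * w j)).re) := by
  simp only [dotProduct, mulVec, Pi.star_apply, map_apply, Complex.star_def]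
  simp only [Finset.mul_sum, ← Finset.sum_add_distrib, Complex.re_sum]
  refine Finset.sum_congr rfl fun i _ => Finset.sum_congr rfl fun j _ => ?_
  have h1 : ((starRingEnd ℂ) (v i * (starRingEnd ℂ) (v i)) : ℂ) = (Complex.normSq (v i) : ℝ) := by
    rw [_root_.map_mul, Complex.conj_conj]
    rw [Complex.conj_mul']; norm_cast; exact (Complex.normSq_eq_norm_sq _).symm
  have h2 : (w j * (starRingEnd ℂ) (w j) : ℂ) = (Complex.normSq (w j) : ℝ) := by
    rw [Complex.mul_conj]
  rw [h1, h2]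
  have e1 : ((Complex.normSq (v i) : ℂ) * (↑(M i j) * ↑(Complex.normSq (w j))))
      = ((Complex.normSq (v i) * M i j * Complex.normSq (w j) : ℝ) : ℂ) := by push_cast; ring
  have e2 : (starRingEnd ℂ) (v i * w i) * (↑(N i j) * (v j * w j))
      = (N i j : ℂ) * ((starRingEnd ℂ) (v i * w i) * (v j * w j)) := by ring
  rw [e1, e2, Complex.add_re, Complex.ofReal_re, Complex.re_ofReal_mul]

lemma offd_map {n : ℕ} (A : Matrix (Fin n) (Fin n) ℝ) :
    offd (A.map Complex.ofReal) = (offd A).map Complex.ofReal := by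
  ext i j
  simp only [offd, Matrix.of_apply, map_apply]
  split <;> simp

lemma sum_pair_le {n : ℕ} (f g : Fin n → Fin n → ℝ)
    (h : ∀ i j, g i j + g j i ≤ f i j + f j i) :
    ∑ i, ∑ j, g i j ≤ ∑ i, ∑ j, f i j := by
  have h2 : ∑ i, ∑ j, (g i j + g j i) ≤ ∑ i, ∑ j, (f i j + f j i) :=
    Finset.sum_le_sum fun i _ => Finset.sum_le_sum fun j _ => h i j
  have eg : ∀ k : Fin n → Fin n → ℝ, ∑ i, ∑ j, (k i j + k j i) = 2 * ∑ i, ∑ j, k i j := by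
    intro k
    simp only [Finset.sum_add_distrib]
    rw [Finset.sum_comm (f := fun i j => k j i)]
    ring
  rw [eg f, eg g] at h2
  linarith

theorem stmt1 {n : ℕ} (A : Matrix (Fin n) (Fin n) ℝ) (hA : A.IsSymm)
    (hIA : ∀ i j, 0 ≤ ((1 : Matrix (Fin n) (Fin n) ℝ) - A) i j) :
    PairCopos (Matrix.diagonal (fun i => A i i) + offd (Matrix.of fun _ _ => (1 : ℝ)))
        (A.map Complex.ofReal)
      ↔ Copositive (A + offd (Matrix.of fun _ _ => (1 : ℝ))) := by
  set J : Matrix (Fin n) (Fin n) ℝ := offd (Matrix.of fun _ _ => (1 : ℝ)) with hJ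
  set M : Matrix (Fin n) (Fin n) ℝ := Matrix.diagonal (fun i => A i i) + J with hM
  have hMd : ∀ i, M i i = A i i := by
    intro i; simp [hM, hJ, offd, Matrix.diagonal]
  have hMo : ∀ i j, i ≠ j → M i j = 1 := by
    intro i j hij; simp [hM, hJ, offd, Matrix.diagonal, hij]
  have hAJd : ∀ i, (A + J) i i = A i i := by
    intro i; simp [hJ, offd]
  have hAJo : ∀ i j, i ≠ j → (A + J) i j = A i j + 1 := by
    intro i j hij; simp [hJ, offd, hij]
  have hOd : ∀ i, (offd A) i i = 0 := by intro i; simp [offd]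
  have hOo : ∀ i j, i ≠ j → (offd A) i j = A i j := by intro i j hij; simp [offd, hij]
  have hAneg : ∀ i j, i ≠ j → A i j ≤ 0 := by
    intro i j hij
    have := hIA i j
    simp [Matrix.one_apply, hij] at this
    linarith
  constructor
  · intro hpc x hx
    have h := hpc (fun i => ((Real.sqrt (x i) : ℝ) : ℂ)) (fun i => ((Real.sqrt (x i) : ℝ) : ℂ))
    rw [offd_map, key] at h
    have hxd : x ⬝ᵥ ((A + J) *ᵥ x) = ∑ i, ∑ j, x i * ((A + J) i j) * x j := by
      simp only [dotProduct, mulVec, Finset.mul_sum]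
      exact Finset.sum_congr rfl fun i _ => Finset.sum_congr rfl fun j _ => by ring
    rw [hxd]
    refine le_of_le_of_eq h (Finset.sum_congr rfl fun i _ => Finset.sum_congr rfl fun j _ => ?_)
    have hns : ∀ k, Complex.normSq ((Real.sqrt (x k) : ℝ) : ℂ) = x k := by
      intro k
      rw [Complex.normSq_ofReal, Real.mul_self_sqrt (hx k)]
    have hre : ((starRingEnd ℂ) (((Real.sqrt (x i) : ℝ) : ℂ) * ((Real.sqrt (x i) : ℝ) : ℂ))
        * (((Real.sqrt (x j) : ℝ) : ℂ) * ((Real.sqrt (x j) : ℝ) : ℂ))).re = x i * x j := by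
      rw [← Complex.ofReal_mul, ← Complex.ofReal_mul, Complex.conj_ofReal,
        ← Complex.ofReal_mul, Complex.ofReal_re,
        Real.mul_self_sqrt (hx i), Real.mul_self_sqrt (hx j)]
    rw [hns, hns, hre]
    by_cases hij : i = j
    · subst hij; rw [hMd, hAJd, hOd]; ring
    · rw [hMo i j hij, hAJo i j hij, hOo i j hij]; ring
  · intro hcop v w
    rw [offd_map, key]
    set x : Fin n → ℝ := fun i => ‖v i * w i‖ with hxdef
    have hx : ∀ i, 0 ≤ x i := fun i => norm_nonneg _
    have hc := hcop x hx
    have hxd : x ⬝ᵥ ((A + J) *ᵥ x) = ∑ i, ∑ j, x i * ((A + J) i j) * x j := by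
      simp only [dotProduct, mulVec, Finset.mul_sum]
      exact Finset.sum_congr rfl fun i _ => Finset.sum_congr rfl fun j _ => by ring
    rw [hxd] at hc
    refine le_trans hc (sum_pair_le _ _ fun i j => ?_)
    by_cases hij : i = j
    · subst hij
      rw [hMd, hAJd, hOd]
      have hxx : x i * x i = Complex.normSq (v i) * Complex.normSq (w i) := by
        rw [hxdef, ← sq, Complex.sq_norm, Complex.normSq_mul]
      exact le_of_eq (by linear_combination (2 * A i i) * hxx)
    · have hji : j ≠ i := fun hh => hij hh.symm
      rw [hMo i j hij, hMo j i hji, hAJo i j hij, hAJo j i hji, hOo i j hij, hOo j i hji]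
      have hsym : A j i = A i j := by
        conv_lhs => rw [← hA]
        rfl
      set ci := v i * w i
      set cj := v j * w j
      have hreq : ((starRingEnd ℂ) cj * ci).re = ((starRingEnd ℂ) ci * cj).re := by
        rw [← Complex.conj_re ((starRingEnd ℂ) cj * ci), _root_.map_mul, Complex.conj_conj]
        ring_nf
      have hrle : ((starRingEnd ℂ) ci * cj).re ≤ x i * x j := by
        calc ((starRingEnd ℂ) ci * cj).re ≤ ‖(starRingEnd ℂ) ci * cj‖ :=
              Complex.re_le_norm _
        _ = x i * x j := by rw [norm_mul, Complex.norm_conj]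
      have h1 : A i j * (x i * x j) ≤ A i j * ((starRingEnd ℂ) ci * cj).re :=
        mul_le_mul_of_nonpos_left hrle (hAneg i j hij)
      have h2 : 2 * (x i * x j) ≤ Complex.normSq (v i) * Complex.normSq (w j)
          + Complex.normSq (v j) * Complex.normSq (w i) := by
        have e : ∀ z : ℂ, Complex.normSq z = ‖z‖ ^ 2 :=
          fun z => (Complex.sq_norm z).symm
        simp only [e, hxdef, norm_mul]
        nlinarith [sq_nonneg (‖v i‖ * ‖w j‖
            - ‖v j‖ * ‖w i‖), norm_nonneg (v i),
          norm_nonneg (v j), norm_nonneg (w i), norm_nonneg (w j)]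
      rw [hsym, hreq]
      linarith

end
end

section
/- Let A be a real n×n matrix and B a complex Hermitian n×n matrix with A_ii = B_ii for all i. Then the pair (A,B) is pairwise copositive if and only if the linear map Φ_{(A,B)} : M_n(ℂ) → M_n(ℂ) defined by Φ_{(A,B)}(X) = D(X) + B̊ ⊙ X, where D(X) is the diagonal matrix with entries D(X)_ii = Σ_j A_ij X_jj and B̊ ⊙ X is the entrywise product of B̊ = B − diag(B) with X, is positive, i.e., Φ_{(A,B)}(X) is positive semidefinite for every positive semidefinite X ∈ M_n(ℂ). -/
open Matrix
open scoped ComplexOrder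

noncomputable section

variable {n : ℕ}

lemma quad_eq_s2 (A : Matrix (Fin n) (Fin n) ℝ) (B : Matrix (Fin n) (Fin n) ℂ)
    (X : Matrix (Fin n) (Fin n) ℂ) (v : Fin n → ℂ) :
    star v ⬝ᵥ ((Matrix.diagonal (fun i => ∑ j, (A i j : ℂ) * X j j)
        + Matrix.hadamard (offd B) X) *ᵥ v)
      = (∑ i, ∑ j, star (v i) * v i * (A i j : ℂ) * X j j)
        + ∑ i, ∑ j, star (v i) * offd B i j * X i j * v j := by
  simp only [dotProduct, Matrix.mulVec, Matrix.add_apply, Matrix.diagonal_apply,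
    Matrix.hadamard_apply, Pi.star_apply, ite_mul, zero_mul, mul_ite, mul_zero,
    add_mul, mul_add, Finset.sum_add_distrib, Finset.sum_ite_eq, Finset.mem_univ,
    if_true, Finset.mul_sum, Finset.sum_mul]
  congr 1
  · exact Finset.sum_congr rfl fun i _ => Finset.sum_congr rfl fun j _ => by ring
  · exact Finset.sum_congr rfl fun i _ => Finset.sum_congr rfl fun j _ => by ring

lemma pair_eq (A : Matrix (Fin n) (Fin n) ℝ) (B : Matrix (Fin n) (Fin n) ℂ)
    (v w : Fin n → ℂ) :
    star (fun i => v i * star (v i)) ⬝ᵥ ((A.map Complex.ofReal) *ᵥ fun i => w i * star (w i))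
      + star (fun i => v i * w i) ⬝ᵥ ((offd B) *ᵥ fun i => v i * w i)
    = (∑ i, ∑ j, star (v i) * v i * (A i j : ℂ) * (star (w j) * w j))
      + ∑ i, ∑ j, star (v i) * offd B i j * (star (w i) * w j) * v j := by
  simp only [dotProduct, Matrix.mulVec, Matrix.map_apply, Pi.star_apply, star_mul', star_star,
    Finset.mul_sum]
  congr 1
  · exact Finset.sum_congr rfl fun i _ => Finset.sum_congr rfl fun j _ => by ring
  · exact Finset.sum_congr rfl fun i _ => Finset.sum_congr rfl fun j _ => by ring

lemma phi_herm (A : Matrix (Fin n) (Fin n) ℝ) (B : Matrix (Fin n) (Fin n) ℂ)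
    (hB : B.IsHermitian) (X : Matrix (Fin n) (Fin n) ℂ) (hX : X.IsHermitian) :
    (Matrix.diagonal (fun i => ∑ j, (A i j : ℂ) * X j j)
      + Matrix.hadamard (offd B) X).IsHermitian := by
  apply Matrix.IsHermitian.add
  · rw [Matrix.isHermitian_diagonal_iff]
    intro i
    rw [_root_.IsSelfAdjoint, star_sum]
    refine Finset.sum_congr rfl fun j _ => ?_
    rw [star_mul', hX.apply j j, Complex.star_def, Complex.conj_ofReal]
  · ext i j
    simp only [Matrix.conjTranspose_apply, Matrix.hadamard_apply, offd, Matrix.of_apply]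
    rw [star_mul']
    by_cases h : i = j
    · simp [h]
    · rw [if_neg h, if_neg (Ne.symm h), hB.apply i j, hX.apply i j]

lemma rank_one_psd (w : Fin n → ℂ) :
    (Matrix.of fun i j => star (w i) * w j : Matrix (Fin n) (Fin n) ℂ).PosSemidef := by
  refine Matrix.PosSemidef.of_dotProduct_mulVec_nonneg ?_ ?_
  · ext i j
    simp only [Matrix.conjTranspose_apply, Matrix.of_apply, star_mul', star_star]
    ring
  · intro x
    have : star x ⬝ᵥ ((Matrix.of fun i j => star (w i) * w j) *ᵥ x)
        = star (w ⬝ᵥ x) * (w ⬝ᵥ x) := by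
      simp only [dotProduct, Matrix.mulVec, Matrix.of_apply, Pi.star_apply, star_sum,
        star_mul', Finset.mul_sum, Finset.sum_mul]
      rw [Finset.sum_comm]
      refine Finset.sum_congr rfl fun i _ => Finset.sum_congr rfl fun j _ => by ring
    rw [this]
    exact star_mul_self_nonneg _

private theorem stmt2' {n : ℕ} (A : Matrix (Fin n) (Fin n) ℝ) (B : Matrix (Fin n) (Fin n) ℂ)
    (hB : B.IsHermitian) (hdiag : ∀ i, (A i i : ℂ) = B i i) :
    (∀ v w : Fin n → ℂ,
      0 ≤ (star (fun i => v i * star (v i)) ⬝ᵥ ((A.map Complex.ofReal) *ᵥ fun i => w i * star (w i))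
        + star (fun i => v i * w i) ⬝ᵥ ((offd B) *ᵥ fun i => v i * w i)).re) ↔
      ∀ X : Matrix (Fin n) (Fin n) ℂ, X.PosSemidef →
        (Matrix.diagonal (fun i => ∑ j, (A i j : ℂ) * X j j)
          + Matrix.hadamard (offd B) X).PosSemidef := by
  constructor
  · intro h X hX
    obtain ⟨S, hS⟩ : ∃ S : Matrix (Fin n) (Fin n) ℂ, X = Sᴴ * S := by
      open scoped MatrixOrder in
      obtain ⟨S, hS⟩ := CStarAlgebra.nonneg_iff_eq_star_mul_self.mp hX.nonneg
      exact ⟨S, hS⟩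
    have hherm := phi_herm A B hB X hX.1
    refine Matrix.PosSemidef.of_dotProduct_mulVec_nonneg hherm fun v => ?_
    set M := Matrix.diagonal (fun i => ∑ j, (A i j : ℂ) * X j j)
      + Matrix.hadamard (offd B) X with hM
    have hreal : star (star v ⬝ᵥ M *ᵥ v) = star v ⬝ᵥ M *ᵥ v := by
      nth_rewrite 1 [star_dotProduct]
      rw [star_star, Matrix.star_mulVec, ← Matrix.dotProduct_mulVec, hherm.eq]
    have hXapp : ∀ i j, X i j = ∑ k, star (S k i) * S k j := by
      intro i j
      rw [hS, Matrix.mul_apply]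
      simp [Matrix.conjTranspose_apply]
    have hQ : star v ⬝ᵥ M *ᵥ v
        = ∑ k, ((star (fun i => v i * star (v i)) ⬝ᵥ
            ((A.map Complex.ofReal) *ᵥ fun i => S k i * star (S k i)))
          + star (fun i => v i * S k i) ⬝ᵥ ((offd B) *ᵥ fun i => v i * S k i)) := by
      rw [hM, quad_eq_s2]
      have e1 : (∑ i, ∑ j, star (v i) * v i * (A i j : ℂ) * X j j)
          = ∑ k, ∑ i, ∑ j, star (v i) * v i * (A i j : ℂ) * (star (S k j) * S k j) := by
        calc (∑ i, ∑ j, star (v i) * v i * (A i j : ℂ) * X j j)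
            = ∑ i, ∑ j, ∑ k, star (v i) * v i * (A i j : ℂ) * (star (S k j) * S k j) := by
              refine Finset.sum_congr rfl fun i _ => Finset.sum_congr rfl fun j _ => ?_
              rw [hXapp j j, Finset.mul_sum]
          _ = ∑ i, ∑ k, ∑ j, star (v i) * v i * (A i j : ℂ) * (star (S k j) * S k j) :=
              Finset.sum_congr rfl fun i _ => Finset.sum_comm
          _ = ∑ k, ∑ i, ∑ j, star (v i) * v i * (A i j : ℂ) * (star (S k j) * S k j) :=
              Finset.sum_comm
      have e2 : (∑ i, ∑ j, star (v i) * offd B i j * X i j * v j)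
          = ∑ k, ∑ i, ∑ j, star (v i) * offd B i j * (star (S k i) * S k j) * v j := by
        calc (∑ i, ∑ j, star (v i) * offd B i j * X i j * v j)
            = ∑ i, ∑ j, ∑ k, star (v i) * offd B i j * (star (S k i) * S k j) * v j := by
              refine Finset.sum_congr rfl fun i _ => Finset.sum_congr rfl fun j _ => ?_
              rw [hXapp i j, Finset.mul_sum, Finset.sum_mul]
          _ = ∑ i, ∑ k, ∑ j, star (v i) * offd B i j * (star (S k i) * S k j) * v j :=
              Finset.sum_congr rfl fun i _ => Finset.sum_comm
          _ = ∑ k, ∑ i, ∑ j, star (v i) * offd B i j * (star (S k i) * S k j) * v j :=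
              Finset.sum_comm
      rw [e1, e2, ← Finset.sum_add_distrib]
      exact Finset.sum_congr rfl fun k _ => (pair_eq A B v (fun i => S k i)).symm
    rw [Complex.le_def]
    constructor
    · rw [Complex.zero_re, hQ, Complex.re_sum]
      exact Finset.sum_nonneg fun k _ => h v (fun i => S k i)
    · rw [Complex.zero_im]
      exact (Complex.conj_eq_iff_im.mp (by rw [← Complex.star_def]; exact hreal)).symm
  · intro h v w
    have hpsd := h (Matrix.of fun i j => star (w i) * w j) (rank_one_psd w)
    have h0 := hpsd.dotProduct_mulVec_nonneg v
    have heq : star (fun i => v i * star (v i)) ⬝ᵥ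
          ((A.map Complex.ofReal) *ᵥ fun i => w i * star (w i))
        + star (fun i => v i * w i) ⬝ᵥ ((offd B) *ᵥ fun i => v i * w i)
        = star v ⬝ᵥ ((Matrix.diagonal (fun i => ∑ j, (A i j : ℂ) *
              (Matrix.of fun i j => star (w i) * w j) j j)
          + Matrix.hadamard (offd B) (Matrix.of fun i j => star (w i) * w j)) *ᵥ v) := by
      rw [pair_eq, quad_eq_s2]
      simp only [Matrix.of_apply]
    rw [heq]
    exact (Complex.le_def.mp h0).1


theorem stmt2 {n : ℕ} (A : Matrix (Fin n) (Fin n) ℝ) (B : Matrix (Fin n) (Fin n) ℂ)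
    (hB : B.IsHermitian) (hdiag : ∀ i, (A i i : ℂ) = B i i) :
    PairCopos A B ↔
      ∀ X : Matrix (Fin n) (Fin n) ℂ, X.PosSemidef →
        (Matrix.diagonal (fun i => ∑ j, (A i j : ℂ) * X j j)
          + Matrix.hadamard (offd B) X).PosSemidef := by
  exact stmt2' A B hB hdiag

end
end

section
/- Let A be a real n×n matrix and B a complex Hermitian n×n matrix with A_ii = B_ii for all i. If the pair (A,B) is pairwise copositive, then the real symmetric matrix A + Aᵀ + 2·Re(B̊) is copositive, where Re(B̊) is the entrywise real part of B̊ = B − diag(B). -/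
open Matrix
open scoped ComplexOrder

noncomputable section

lemma re_dot {n : ℕ} (C : Matrix (Fin n) (Fin n) ℂ) (x : Fin n → ℝ) :
    ((star (fun i => (x i : ℂ))) ⬝ᵥ (C *ᵥ fun i => (x i : ℂ))).re
      = x ⬝ᵥ ((C.map Complex.re) *ᵥ x) := by
  simp [dotProduct, mulVec, Complex.re_sum, Complex.mul_re, Complex.im_sum, Finset.mul_sum]

theorem stmt3 {n : ℕ} (A : Matrix (Fin n) (Fin n) ℝ) (B : Matrix (Fin n) (Fin n) ℂ)
    (hB : B.IsHermitian) (hdiag : ∀ i, (A i i : ℂ) = B i i)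
    (h : PairCopos A B) :
    Copositive (A + Aᵀ + (2 : ℝ) • ((offd B).map Complex.re)) := by
  intro x hx
  set v : Fin n → ℂ := fun i => (Real.sqrt (x i) : ℂ) with hv
  have hvv : (fun i => v i * star (v i)) = fun i => (x i : ℂ) := by
    funext i
    simp [hv, ← Complex.ofReal_mul, Real.mul_self_sqrt (hx i)]
  have hvv2 : (fun i => v i * v i) = fun i => (x i : ℂ) := by
    funext i
    simp [hv, ← Complex.ofReal_mul, Real.mul_self_sqrt (hx i)]
  have key := h v v
  rw [hvv, hvv2, Complex.add_re, re_dot, re_dot] at key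
  have hmap : ((A.map Complex.ofReal).map Complex.re) = A := by
    ext i j; simp
  rw [hmap] at key
  have e2 : x ⬝ᵥ ((A + Aᵀ + (2 : ℝ) • ((offd B).map Complex.re)) *ᵥ x)
      = x ⬝ᵥ (A *ᵥ x) + x ⬝ᵥ (Aᵀ *ᵥ x) + 2 * (x ⬝ᵥ (((offd B).map Complex.re) *ᵥ x)) := by
    simp [add_mulVec, dotProduct_add, smul_mulVec, dotProduct_smul, smul_eq_mul]
  have e3 : x ⬝ᵥ (Aᵀ *ᵥ x) = x ⬝ᵥ (A *ᵥ x) := by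
    rw [Matrix.dotProduct_mulVec, Matrix.vecMul_transpose, dotProduct_comm]
  rw [e2, e3]
  linarith

end
end

section
/- Let B be a complex Hermitian n×n matrix (its diagonal entries are real), and let D be the real diagonal n×n matrix with D_ii = B_ii. Then the pair (D, B) is pairwise copositive if and only if B is positive semidefinite. -/
open Matrix
open scoped ComplexOrder

noncomputable section

theorem stmt4 {n : ℕ} (B : Matrix (Fin n) (Fin n) ℂ) (hB : B.IsHermitian) :
    PairCopos (Matrix.diagonal fun i => (B i i).re) B ↔ B.PosSemidef := by
  have hdiag : ∀ i, ((B i i).re : ℂ) = B i i := by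
    intro i
    exact Complex.conj_eq_iff_re.mp (hB.apply i i)
  have key : ∀ v w : Fin n → ℂ,
      (star (fun i => v i * star (v i)) ⬝ᵥ
          (((Matrix.diagonal fun i => (B i i).re).map Complex.ofReal) *ᵥ fun i => w i * star (w i))
        + star (fun i => v i * w i) ⬝ᵥ ((offd B) *ᵥ fun i => v i * w i))
      = star (fun i => v i * w i) ⬝ᵥ (B *ᵥ fun i => v i * w i) := by
    intro v w
    simp only [dotProduct, mulVec, offd, Matrix.map_apply, Matrix.diagonal_apply,
      Pi.star_apply, Matrix.of_apply]
    rw [← Finset.sum_add_distrib]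
    refine Finset.sum_congr rfl fun i _ => ?_
    have h1 : (∑ j, (↑(if i = j then (B i i).re else 0) : ℂ) * (w j * star (w j)))
        = ((B i i).re : ℂ) * (w i * star (w i)) := by
      rw [Finset.sum_eq_single i]
      · simp
      · intro j _ hj; simp [Ne.symm hj]
      · simp
    have h2 : (∑ j, (if i = j then 0 else B i j) * (v j * w j))
        = (∑ j, B i j * (v j * w j)) - B i i * (v i * w i) := by
      rw [eq_sub_iff_add_eq, ← Finset.sum_erase_add _ _ (Finset.mem_univ i), if_pos rfl,
        zero_mul, add_zero,
        ← Finset.sum_erase_add _ (fun j => B i j * (v j * w j)) (Finset.mem_univ i)]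
      congr 1
      refine Finset.sum_congr rfl fun j hj => ?_
      rw [if_neg (Ne.symm (Finset.ne_of_mem_erase hj))]
    rw [h1, h2, hdiag i]
    simp only [star_mul', star_star]
    ring
  constructor
  · intro h
    refine .of_dotProduct_mulVec_nonneg hB fun x => ?_
    have hx := h (fun _ => 1) x
    rw [key] at hx
    have hself : star (star (fun i => (1:ℂ) * x i) ⬝ᵥ (B *ᵥ fun i => (1:ℂ) * x i))
        = star (fun i => (1:ℂ) * x i) ⬝ᵥ (B *ᵥ fun i => (1:ℂ) * x i) := by
      nth_rewrite 1 [← hB.eq]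
      simp only [dotProduct, mulVec, star_sum, star_mul', star_star, conjTranspose_apply,
        Pi.star_apply, Finset.mul_sum, Finset.sum_mul]
      rw [Finset.sum_comm]
      refine Finset.sum_congr rfl fun i _ => Finset.sum_congr rfl fun j _ => ?_
      ring
    simp only [one_mul] at hx hself
    rw [Complex.nonneg_iff]
    exact ⟨hx, (Complex.conj_eq_iff_im.mp hself).symm⟩
  · intro h v w
    rw [key]
    have := h.dotProduct_mulVec_nonneg (fun i => v i * w i)
    rw [Complex.nonneg_iff] at this
    exact this.1

end
end

section
/- Let A be a real symmetric n×n matrix. Then the pair (A, A) is pairwise copositive if and only if every entry of A is nonnegative. -/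
open Matrix
open scoped ComplexOrder

noncomputable section

theorem stmt5 {n : ℕ} (A : Matrix (Fin n) (Fin n) ℝ) (hA : A.IsSymm) :
    PairCopos A (A.map Complex.ofReal) ↔ ∀ i j, 0 ≤ A i j := by
  constructor
  · intro h i j
    have := h (Pi.single i 1) (Pi.single j 1)
    simp [dotProduct, mulVec, offd, Pi.single_apply, Matrix.map_apply, apply_ite] at this
    exact this
  · intro h
    intro v w
    set x : Fin n → ℂ := fun i => v i * w i with hx
    set f : Fin n → Fin n → ℝ := fun i j =>
      A i j * Complex.normSq (v i) * Complex.normSq (w j)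
        + (if i = j then 0 else A i j * ((starRingEnd ℂ) (x i) * x j).re) with hf
    have key : (star (fun i => v i * star (v i)) ⬝ᵥ ((A.map Complex.ofReal) *ᵥ fun i => w i * star (w i))
          + star (fun i => v i * w i) ⬝ᵥ ((offd (A.map Complex.ofReal)) *ᵥ fun i => v i * w i)).re
          = ∑ i, ∑ j, f i j := by
      simp only [dotProduct, mulVec, offd, Matrix.map_apply, Matrix.of_apply, Pi.star_apply,
        Finset.mul_sum, Complex.add_re, Complex.re_sum, hf]
      rw [show (∑ i, ∑ j, (A i j * Complex.normSq (v i) * Complex.normSq (w j)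
          + if i = j then 0 else A i j * ((starRingEnd ℂ) (x i) * x j).re))
          = (∑ i, ∑ j, A i j * Complex.normSq (v i) * Complex.normSq (w j))
            + ∑ i, ∑ j, (if i = j then 0 else A i j * ((starRingEnd ℂ) (x i) * x j).re) from by
        rw [← Finset.sum_add_distrib]
        exact Finset.sum_congr rfl fun i _ => Finset.sum_add_distrib]
      congr 1
      · refine Finset.sum_congr rfl fun i _ => Finset.sum_congr rfl fun j _ => ?_
        have e1 : star (v i * star (v i)) = (Complex.normSq (v i) : ℂ) := by
          rw [star_mul', star_star, mul_comm]
          simp [Complex.star_def, Complex.mul_conj]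
        have e2 : w j * star (w j) = (Complex.normSq (w j) : ℂ) := Complex.mul_conj _
        rw [e1, e2, ← Complex.ofReal_mul, ← Complex.ofReal_mul, Complex.ofReal_re]
        ring
      · refine Finset.sum_congr rfl fun i _ => Finset.sum_congr rfl fun j _ => ?_
        rcases eq_or_ne i j with rfl | hij
        · simp
        · simp only [if_neg hij]
          rw [show star (v i * w i) = (starRingEnd ℂ) (x i) from rfl, mul_left_comm,
            Complex.re_ofReal_mul]
    rw [key]
    have pair : ∀ i j, 0 ≤ f i j + f j i := by
      intro i j
      rcases eq_or_ne i j with rfl | hij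
      · simp only [hf, eq_self_iff_true, if_true, add_zero, if_pos]
        have := mul_nonneg (mul_nonneg (h i i) (Complex.normSq_nonneg (v i))) (Complex.normSq_nonneg (w i))
        linarith
      · simp only [hf, if_neg hij, if_neg hij.symm]
        have hsym : A j i = A i j := hA.apply i j
        set a := ‖v i‖
        set b := ‖w i‖
        set c := ‖v j‖
        set d := ‖w j‖
        have h1 : ((starRingEnd ℂ) (x j) * x i).re = ((starRingEnd ℂ) (x i) * x j).re := by
          rw [← Complex.conj_re ((starRingEnd ℂ) (x j) * x i)]
          simp [mul_comm]
        have h2 : -(a * b * (c * d)) ≤ ((starRingEnd ℂ) (x i) * x j).re := by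
          have h3 := Complex.abs_re_le_norm ((starRingEnd ℂ) (x i) * x j)
          have h4 : ‖(starRingEnd ℂ) (x i) * x j‖ = a * b * (c * d) := by
            simp only [norm_mul, Complex.norm_conj, hx]; rfl
          rw [h4] at h3
          have := (abs_le.mp h3).1; linarith
        have e1 : Complex.normSq (v i) = a ^ 2 := (Complex.sq_norm _).symm
        have e2 : Complex.normSq (w i) = b ^ 2 := (Complex.sq_norm _).symm
        have e3 : Complex.normSq (v j) = c ^ 2 := (Complex.sq_norm _).symm
        have e4 : Complex.normSq (w j) = d ^ 2 := (Complex.sq_norm _).symm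
        rw [hsym, h1, e1, e2, e3, e4]
        have h5 : 0 ≤ A i j * (a ^ 2 * d ^ 2 + c ^ 2 * b ^ 2
            + 2 * ((starRingEnd ℂ) (x i) * x j).re) := by
          refine mul_nonneg (h i j) ?_
          nlinarith [sq_nonneg (a * d - c * b), h2]
        nlinarith [h5]
    have hsum : (0:ℝ) ≤ ∑ i, ∑ j, (f i j + f j i) :=
      Finset.sum_nonneg fun i _ => Finset.sum_nonneg fun j _ => pair i j
    have hswap : ∑ i : Fin n, ∑ j : Fin n, f j i = ∑ i, ∑ j, f i j := Finset.sum_comm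
    rw [show (∑ i, ∑ j, (f i j + f j i)) = (∑ i, ∑ j, f i j) + ∑ i, ∑ j, f j i by
      rw [← Finset.sum_add_distrib]; exact Finset.sum_congr rfl fun i _ => Finset.sum_add_distrib] at hsum
    linarith

end
end

section
/- Let N be a real symmetric n×n matrix with all entries nonnegative, and let N̊ = N − diag(N) denote N with its diagonal set to zero. Then the pair (N̊, −N̊) is pairwise copositive. -/
open Matrix
open scoped ComplexOrder

noncomputable section

theorem stmt6 {n : ℕ} (N : Matrix (Fin n) (Fin n) ℝ) (hN : N.IsSymm)
    (hNpos : ∀ i j, 0 ≤ N i j) :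
    PairCopos (offd N) ((-(offd N)).map Complex.ofReal) := by
  intro v w
  set N' : Matrix (Fin n) (Fin n) ℝ := offd N with hN'
  have hsym : ∀ i j, N' i j = N' j i := by
    intro i j
    simp only [hN', offd, Matrix.of_apply, eq_comm (a := i)]
    rcases eq_or_ne j i with h | h
    · simp [h]
    · simp [h, hN.apply i j]
  have hpos : ∀ i j, 0 ≤ N' i j := by
    intro i j
    simp only [hN', offd, Matrix.of_apply]
    split <;> [exact le_refl 0; exact hNpos i j]
  -- the second matrix equals (-N').map ofReal
  have hoffd : offd ((-(offd N)).map Complex.ofReal) = fun i j => (-(N' i j) : ℂ) := by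
    funext i j
    simp only [offd, Matrix.of_apply, Matrix.map_apply, Matrix.neg_apply, hN']
    split <;> simp_all
  set f : Fin n → Fin n → ℝ := fun i j =>
    N' i j * (‖v i‖^2 * ‖w j‖^2
      - ((starRingEnd ℂ) (v i * w i) * (v j * w j)).re) with hf
  have key : (star (fun i => v i * star (v i)) ⬝ᵥ ((N'.map Complex.ofReal) *ᵥ fun i => w i * star (w i))
        + star (fun i => v i * w i) ⬝ᵥ ((offd ((-(offd N)).map Complex.ofReal)) *ᵥ fun i => v i * w i)).re
      = ∑ i, ∑ j, f i j := by
    rw [hoffd]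
    simp only [dotProduct, mulVec, dotProduct, Matrix.map_apply, Pi.star_apply,
      Complex.add_re, Complex.re_sum, Finset.mul_sum]
    rw [← Finset.sum_add_distrib]
    refine Finset.sum_congr rfl fun i _ => ?_
    rw [← Finset.sum_add_distrib]
    refine Finset.sum_congr rfl fun j _ => ?_
    simp only [hf, Complex.sq_norm, Complex.normSq_apply, RCLike.star_def,
      Complex.mul_re, Complex.mul_im, Complex.conj_re, Complex.conj_im,
      Complex.ofReal_re, Complex.ofReal_im, Complex.neg_re, Complex.neg_im, neg_zero]
    ring
  rw [key]
  have h2 : ∀ i j, 0 ≤ f i j + f j i := by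
    intro i j
    have hre : ((starRingEnd ℂ) (v i * w i) * (v j * w j)).re ≤
        ‖v i‖ * ‖w i‖ * (‖v j‖ * ‖w j‖) := by
      calc ((starRingEnd ℂ) (v i * w i) * (v j * w j)).re ≤ ‖(starRingEnd ℂ) (v i * w i) * (v j * w j)‖ := Complex.re_le_norm _
        _ = _ := by rw [norm_mul, norm_mul, Complex.norm_conj, norm_mul]
    have hre2 : ((starRingEnd ℂ) (v j * w j) * (v i * w i)).re =
        ((starRingEnd ℂ) (v i * w i) * (v j * w j)).re := by
      rw [← Complex.conj_re ((starRingEnd ℂ) (v j * w j) * (v i * w i))]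
      simp [mul_comm]
    simp only [hf]
    rw [hsym j i, hre2]
    have := hpos i j
    nlinarith [sq_nonneg (‖v i‖ * ‖w j‖ - ‖v j‖ * ‖w i‖),
      norm_nonneg (v i), norm_nonneg (v j), norm_nonneg (w i), norm_nonneg (w j)]
  have : 0 ≤ ∑ i, ∑ j, (f i j + f j i) :=
    Finset.sum_nonneg fun i _ => Finset.sum_nonneg fun j _ => h2 i j
  have hswap : ∑ i, ∑ j, f j i = ∑ i, ∑ j, f i j := Finset.sum_comm
  simp only [Finset.sum_add_distrib, hswap] at this
  linarith


end
end

section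
/- Let A be a real n×n matrix with all entries nonnegative and B a complex Hermitian n×n matrix with A_ii = B_ii for all i. If the pair (A,B) is pairwise decomposable, then the real symmetric matrix A + Aᵀ + 2·Re(B̊) belongs to SPN_n, where Re(B̊) is the entrywise real part of B̊ = B − diag(B). -/
open Matrix
open scoped ComplexOrder

noncomputable section

lemma re_psd {n : ℕ} {B1 : Matrix (Fin n) (Fin n) ℂ} (h : B1.PosSemidef) :
    (B1.map Complex.re).PosSemidef := by
  refine Matrix.posSemidef_iff_dotProduct_mulVec.mpr ⟨?_, ?_⟩
  · ext i j
    have := congrArg Complex.re (congrFun (congrFun h.1 j) i)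
    simpa [Matrix.conjTranspose_apply, Matrix.IsHermitian] using this.symm
  · intro x
    have h2 := h.dotProduct_mulVec_nonneg (fun i => (x i : ℂ))
    have hre := (Complex.nonneg_iff.mp h2).1
    refine hre.trans_eq (Eq.symm ?_)
    simp [dotProduct, Matrix.mulVec, Complex.re_sum, Finset.mul_sum]


theorem stmt7 {n : ℕ} (A : Matrix (Fin n) (Fin n) ℝ) (B : Matrix (Fin n) (Fin n) ℂ)
    (hApos : ∀ i j, 0 ≤ A i j) (hB : B.IsHermitian) (hdiag : ∀ i, (A i i : ℂ) = B i i)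
    (h : PairDecomp A B) :
    SPN (A + Aᵀ + (2 : ℝ) • ((offd B).map Complex.re)) := by
  obtain ⟨B1, B2, hsum, hB1, hB2, hB2d, hB2off⟩ := h
  have hB1h := hB1.1
  have hB1re : ∀ i j, (B1 j i).re = (B1 i j).re := by
    intro i j
    have := congrArg Complex.re (congrFun (congrFun hB1h j) i)
    simpa [Matrix.conjTranspose_apply] using this.symm
  have hB2re : ∀ i j, (B2 j i).re = (B2 i j).re := by
    intro i j
    have := congrArg Complex.re (congrFun (congrFun hB2 j) i)
    simpa [Matrix.conjTranspose_apply] using this.symm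
  set P : Matrix (Fin n) (Fin n) ℝ := (2 : ℝ) • B1.map Complex.re with hP
  set E : Matrix (Fin n) (Fin n) ℝ :=
    A + Aᵀ + (2 : ℝ) • ((offd B).map Complex.re) - P with hE
  have hEentry : ∀ i j, E i j =
      A i j + A j i + 2 * ((offd B) i j).re - 2 * (B1 i j).re := by
    intro i j
    simp [hE, hP, Matrix.sub_apply, Matrix.add_apply, Matrix.smul_apply, Matrix.map_apply,
      Matrix.transpose_apply]
  refine ⟨P, E, by simp [hE], ?_, ?_, ?_⟩
  · -- P PSD
    have hM := re_psd hB1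
    refine Matrix.posSemidef_iff_dotProduct_mulVec.mpr ⟨?_, ?_⟩
    · ext i j
      simp [hP, Matrix.conjTranspose_apply, Matrix.smul_apply, Matrix.map_apply, hB1re i j]
    · intro x
      have := hM.dotProduct_mulVec_nonneg x
      have h2 : (P *ᵥ x) = (2 : ℝ) • ((B1.map Complex.re) *ᵥ x) := by
        simp [hP, Matrix.smul_mulVec]
      rw [h2]
      simp only [star_trivial] at this ⊢
      rw [dotProduct_smul]
      positivity
  · -- symmetry
    ext i j
    simp only [Matrix.transpose_apply]
    rw [hEentry, hEentry]
    by_cases hij : i = j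
    · subst hij; ring
    · simp [offd, hij, Ne.symm hij, hB1re i j]
      rw [show B j i = B1 j i + B2 j i from by rw [hsum]; rfl,
          show B i j = B1 i j + B2 i j from by rw [hsum]; rfl]
      simp [Complex.add_re, hB1re i j, hB2re i j]
      ring
  · intro i j
    rw [hEentry]
    by_cases hij : i = j
    · subst hij
      have hA : A i i = (B1 i i).re + (B2 i i).re := by
        have := congrArg Complex.re (hdiag i)
        simpa [hsum, Complex.add_re] using this
      simp [offd]
      nlinarith [hB2d i]
    · have hBij : (B i j).re = (B1 i j).re + (B2 i j).re := by
        rw [hsum]; simp [Complex.add_re]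
      simp only [offd, Matrix.of_apply, if_neg hij, hBij]
      set r := (B2 i j).re with hr
      have hr2 : r ^ 2 ≤ A i j * A j i := by
        have h1 : r ^ 2 ≤ ‖B2 i j‖ ^ 2 := by
          rw [Complex.sq_norm, Complex.normSq_apply]
          nlinarith [sq_nonneg (B2 i j).im]
        exact h1.trans (hB2off i j hij)
      nlinarith [hApos i j, hApos j i, sq_nonneg (A i j - A j i),
        sq_nonneg (A i j + A j i + 2 * r)]

end
end

section
/- Let A be a real symmetric n×n matrix and let N be a real symmetric n×n matrix with all entries nonnegative such that N_ii = A_ii for all i and N_ij ≥ (1/2)·A_ij + (1/4)·(A_ii + A_jj) for all i ≠ j. Then A belongs to SPN_n if and only if the pair (N, A − N̊) is pairwise decomposable, where N̊ = N − diag(N) denotes N with its diagonal set to zero. -/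
open Matrix
open scoped ComplexOrder

noncomputable section

/-- The complexification of a real PSD matrix is PSD. -/
lemma map_psd_aux {n : ℕ} {P : Matrix (Fin n) (Fin n) ℝ} (hP : P.PosSemidef) :
    (P.map Complex.ofReal).PosSemidef := by
  obtain ⟨B, rfl⟩ : ∃ B : Matrix (Fin n) (Fin n) ℝ, P = Bᴴ * B := by
    open scoped MatrixOrder Matrix.Norms.L2Operator in
    exact CStarAlgebra.nonneg_iff_eq_star_mul_self.mp hP.nonneg
  have : (Bᴴ * B).map Complex.ofReal = (B.map Complex.ofReal)ᴴ * (B.map Complex.ofReal) := by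
    rw [← Matrix.conjTranspose_map Complex.ofReal (fun r => by simp)]
    exact Matrix.map_mul (f := Complex.ofRealHom)
  rw [this]
  exact Matrix.posSemidef_conjTranspose_mul_self _

/-- The real part of a complex PSD matrix is PSD. -/
lemma re_psd_aux {n : ℕ} {B : Matrix (Fin n) (Fin n) ℂ} (hB : B.PosSemidef) :
    (Matrix.of fun i j => (B i j).re : Matrix (Fin n) (Fin n) ℝ).PosSemidef := by
  refine PosSemidef.of_dotProduct_mulVec_nonneg ?_ ?_
  · ext i j
    have := congrFun (congrFun hB.1 i) j
    simp only [conjTranspose_apply, Matrix.of_apply] at this ⊢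
    rw [← this]
    simp
  · intro x
    have h := hB.dotProduct_mulVec_nonneg (fun i => (x i : ℂ))
    rw [Complex.nonneg_iff] at h
    have := h.1
    refine this.trans_eq ?_
    simp [dotProduct, mulVec, Complex.re_sum, Complex.mul_re, Finset.mul_sum]

/-- Off-diagonal entries of a PSD matrix are bounded below. -/
lemma psd_entry_aux {n : ℕ} {P : Matrix (Fin n) (Fin n) ℝ} (hP : P.PosSemidef)
    (i j : Fin n) : -(P i i + P j j) / 2 ≤ P i j := by
  have h := hP.dotProduct_mulVec_nonneg (fun k => (if k = i then (1:ℝ) else 0) + (if k = j then 1 else 0))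
  have hsym : P j i = P i j := by
    have := congrFun (congrFun hP.1 j) i
    simpa [conjTranspose_apply] using this.symm
  simp only [star_trivial, dotProduct, mulVec, add_mul, mul_add, ite_mul, mul_ite,
    one_mul, mul_one, zero_mul, mul_zero, Finset.sum_add_distrib,
    Finset.sum_ite_eq', Finset.mem_univ, if_true] at h
  rw [hsym] at h
  linarith

theorem stmt8 {n : ℕ} (A N : Matrix (Fin n) (Fin n) ℝ)
    (hA : A.IsSymm) (hN : N.IsSymm) (hNpos : ∀ i j, 0 ≤ N i j)
    (hdiag : ∀ i, N i i = A i i)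
    (hN2 : ∀ i j, i ≠ j → (1 / 2) * A i j + (1 / 4) * (A i i + A j j) ≤ N i j) :
    SPN A ↔ PairDecomp N ((A - offd N).map Complex.ofReal) := by
  have hNsym : ∀ i j, N j i = N i j := fun i j => (congrFun (congrFun hN j) i).symm
  have hAsym : ∀ i j, A j i = A i j := fun i j => (congrFun (congrFun hA j) i).symm
  constructor
  · rintro ⟨P, E, hAE, hP, hEsym, hEpos⟩
    have hEsym' : ∀ i j, E j i = E i j := fun i j => (congrFun (congrFun hEsym j) i).symm
    have hAeq : ∀ i j, A i j = P i j + E i j := fun i j => congrFun (congrFun hAE i) j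
    have hPd : ∀ i, P i i ≤ A i i := fun i => by have := hEpos i i; linarith [hAeq i i]
    -- key bound: 0 ≤ E i j ≤ 2 * N i j for i ≠ j
    have hkey : ∀ i j, i ≠ j → E i j ≤ 2 * N i j := by
      intro i j hij
      have h1 := psd_entry_aux hP i j
      have h2 := hN2 i j hij
      have h3 := hPd i
      have h4 := hPd j
      have := hAeq i j
      linarith
    refine ⟨P.map Complex.ofReal, (E - offd N).map Complex.ofReal, ?_, map_psd_aux hP, ?_, ?_, ?_⟩
    · ext i j
      simp [offd, Matrix.map_apply, Matrix.sub_apply, Matrix.add_apply, hAeq i j]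
      push_cast
      ring
    · ext i j
      simp only [conjTranspose_apply, Matrix.map_apply, Matrix.sub_apply, offd, Matrix.of_apply]
      rw [Complex.star_def, Complex.conj_ofReal]
      rcases eq_or_ne i j with rfl | hij
      · rfl
      · rw [if_neg (Ne.symm hij), if_neg hij, hEsym' i j, hNsym i j]
    · intro i
      simp [offd, hEpos i i]
    · intro i j hij
      have h1 : ‖(((E - offd N).map Complex.ofReal) i j)‖ = |E i j - N i j| := by
        simp [offd, Matrix.map_apply, Matrix.sub_apply, if_neg hij, ← Complex.ofReal_sub, Complex.norm_real]
      rw [h1, hNsym i j, ← sq]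
      have h2 : |E i j - N i j| ≤ N i j :=
        abs_le.mpr ⟨by linarith [hEpos i j], by linarith [hkey i j hij]⟩
      exact pow_le_pow_left₀ (abs_nonneg _) h2 2
  · rintro ⟨B1, B2, hsum, hB1, hB2, hB2d, hB2od⟩
    set P : Matrix (Fin n) (Fin n) ℝ := Matrix.of fun i j => (B1 i j).re with hPdef
    have hre : ∀ i j, A i j - offd N i j = (B1 i j).re + (B2 i j).re := by
      intro i j
      have := congrFun (congrFun hsum i) j
      simp only [Matrix.map_apply, Matrix.sub_apply, Matrix.add_apply] at this
      have := congrArg Complex.re this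
      simpa using this
    have hE : ∀ i j, A i j - P i j = (B2 i j).re + offd N i j := by
      intro i j
      have := hre i j
      simp only [hPdef, Matrix.of_apply]
      linarith
    refine ⟨P, A - P, by ext i j; simp [Matrix.add_apply, Matrix.sub_apply],
      re_psd_aux hB1, ?_, ?_⟩
    · ext i j
      simp only [Matrix.transpose_apply, Matrix.sub_apply]
      rw [hE i j, hE j i]
      have : (B2 j i).re = (B2 i j).re := by
        have := congrFun (congrFun hB2 i) j
        simp only [conjTranspose_apply] at this
        rw [← this]; simp
      rw [this]
      rcases eq_or_ne i j with rfl | hij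
      · rfl
      · simp only [offd, Matrix.of_apply, if_neg hij, if_neg (Ne.symm hij), hNsym i j]
    · intro i j
      rw [Matrix.sub_apply, hE i j]
      rcases eq_or_ne i j with rfl | hij
      · simpa [offd] using hB2d i
      · have h1 := hB2od i j hij
        rw [hNsym i j, ← sq] at h1
        have h2 : ‖B2 i j‖ ≤ N i j := by
          nlinarith [norm_nonneg (B2 i j), hNpos i j]
        have h3 : -(N i j) ≤ (B2 i j).re := by
          have := Complex.abs_re_le_norm (B2 i j)
          have := neg_abs_le (B2 i j).re
          linarith
        simp only [offd, Matrix.of_apply, if_neg hij]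
        linarith

end
end

section
/- Let G be a finite simple graph on n vertices with at least one edge, let A_G be its adjacency matrix, let ω = ω(G) ≥ 2 be its clique number, and let t ≥ 0 be a real number. Then the linear map Φ_t^G : M_n(ℂ) → M_n(ℂ) defined by Φ_t^G(Z) = (Tr Z)·I − t·(A_G ⊙ Z), where A_G ⊙ Z is the entrywise product of A_G (entries regarded as complex numbers) with Z, is positive — i.e., Φ_t^G(Z) is positive semidefinite for every positive semidefinite Z ∈ M_n(ℂ) — if and only if t ≤ 1 + 1/(ω − 1), equivalently t·(ω − 1) ≤ ω. -/
open Matrix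
open scoped ComplexOrder

noncomputable section


lemma quad_shift {n : ℕ} (A : Matrix (Fin n) (Fin n) ℝ) (hs : ∀ p q, A p q = A q p)
    (i j : Fin n) (hAii : A i i = 0) (hAjj : A j j = 0) (hAij : A i j = 0)
    (x : Fin n → ℝ) (c : ℝ) :
    (x + c • (Pi.single i 1 - Pi.single j 1)) ⬝ᵥ (A *ᵥ (x + c • (Pi.single i 1 - Pi.single j 1)))
      = x ⬝ᵥ (A *ᵥ x) + 2*c*((A *ᵥ x) i - (A *ᵥ x) j) := by
  have hAji : A j i = 0 := by rw [hs]; exact hAij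
  set d : Fin n → ℝ := Pi.single i 1 - Pi.single j 1 with hd
  have hAd : A *ᵥ d = fun p => A p i - A p j := by
    rw [hd, mulVec_sub, mulVec_single, mulVec_single]
    funext p; simp
  have h1 : x ⬝ᵥ (A *ᵥ d) = (A *ᵥ x) i - (A *ᵥ x) j := by
    rw [hAd]
    simp only [dotProduct, mulVec, mul_sub, Finset.sum_sub_distrib]
    congr 1 <;> (apply Finset.sum_congr rfl; intro p _; rw [hs]; ring)
  have h2 : d ⬝ᵥ (A *ᵥ x) = (A *ᵥ x) i - (A *ᵥ x) j := by
    rw [hd, sub_dotProduct, single_dotProduct, single_dotProduct]; ring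
  have h3 : d ⬝ᵥ (A *ᵥ d) = 0 := by
    rw [hAd, hd, sub_dotProduct, single_dotProduct, single_dotProduct]
    simp [hAii, hAjj, hAij, hAji]
  rw [mulVec_add, mulVec_smul, dotProduct_add, add_dotProduct, add_dotProduct,
    dotProduct_smul, dotProduct_smul, smul_dotProduct, smul_dotProduct,
    h1, h2, h3]
  simp; ring

/-- Motzkin–Straus, upper-bound direction. -/
lemma motzkin_straus {n : ℕ} (G : SimpleGraph (Fin n)) [DecidableRel G.Adj]
    (w : ℕ) (hw : 1 ≤ w)
    (hmax : ∀ (m : ℕ) (s : Finset (Fin n)), G.IsNClique m s → m ≤ w)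
    (x : Fin n → ℝ) (hx : ∀ i, 0 ≤ x i) :
    (w : ℝ) * (x ⬝ᵥ (G.adjMatrix ℝ *ᵥ x)) ≤ ((w : ℝ) - 1) * (∑ i, x i) ^ 2 := by
  set A := G.adjMatrix ℝ with hA
  have hs : ∀ p q, A p q = A q p := by
    intro p q; simp [hA, SimpleGraph.adjMatrix_apply, G.adj_comm]
  suffices H : ∀ k : ℕ, ∀ y : Fin n → ℝ, (∀ i, 0 ≤ y i) →
      (Finset.univ.filter fun i => y i ≠ 0).card ≤ k →
      (w : ℝ) * (y ⬝ᵥ (A *ᵥ y)) ≤ ((w : ℝ) - 1) * (∑ i, y i) ^ 2 by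
    exact H _ x hx le_rfl
  intro k
  induction k with
  | zero =>
    intro y hy hcard
    have hy0 : y = 0 := by
      funext i
      by_contra hne
      have hmem : i ∈ Finset.univ.filter fun i => y i ≠ 0 := by
        simp only [Finset.mem_filter, Finset.mem_univ, true_and]; exact hne
      have := Finset.card_pos.2 ⟨i, hmem⟩
      omega
    simp [hy0]
  | succ k ih =>
    intro y hy hcard
    set S := Finset.univ.filter fun i => y i ≠ 0 with hS
    have hmemS : ∀ i, i ∈ S ↔ y i ≠ 0 := by
      intro i; simp [hS]
    by_cases hclq : ∀ i ∈ S, ∀ j ∈ S, i ≠ j → G.Adj i j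
    · -- support is a clique
      have hSclique : G.IsNClique S.card S := ⟨fun i hi j hj hij => hclq i hi j hj hij, rfl⟩
      have hkw : S.card ≤ w := hmax _ _ hSclique
      have hsum : ∑ i, y i = ∑ i ∈ S, y i := by
        rw [← Finset.sum_subset (Finset.subset_univ S)]
        intro i _ hi
        by_contra h; exact hi ((hmemS i).2 h)
      have expand : y ⬝ᵥ (A *ᵥ y) = ∑ i ∈ S, ∑ j ∈ S, A i j * (y i * y j) := by
        have h1 : y ⬝ᵥ (A *ᵥ y) = ∑ i, ∑ j, A i j * (y i * y j) := by
          simp only [dotProduct, mulVec, Finset.mul_sum]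
          exact Finset.sum_congr rfl fun i _ => Finset.sum_congr rfl fun j _ => by ring
        rw [h1, ← Finset.sum_subset (Finset.subset_univ S)]
        · apply Finset.sum_congr rfl; intro i _
          rw [← Finset.sum_subset (Finset.subset_univ S)]
          intro j _ hj
          have : y j = 0 := by by_contra h; exact hj ((hmemS j).2 h)
          rw [this]; ring
        · intro i _ hi
          have : y i = 0 := by by_contra h; exact hi ((hmemS i).2 h)
          apply Finset.sum_eq_zero; intro j _; rw [this]; ring
      have inner : ∀ i ∈ S, ∑ j ∈ S, A i j * (y i * y j)
          = (∑ j ∈ S, y i * y j) - y i ^ 2 := by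
        intro i hi
        have step : ∑ j ∈ S, A i j * (y i * y j)
            = ∑ j ∈ S, (y i * y j - if j = i then y i * y j else 0) := by
          apply Finset.sum_congr rfl; intro j hj
          by_cases hji : j = i
          · subst hji; simp [hA, SimpleGraph.adjMatrix_apply]
          · have hadj : G.Adj i j := hclq i hi j hj (Ne.symm hji)
            simp [hA, SimpleGraph.adjMatrix_apply, hadj, hji]
        rw [step, Finset.sum_sub_distrib, Finset.sum_ite_eq' S i (fun j => y i * y j)]
        simp [hi]; ring
      have hq : y ⬝ᵥ (A *ᵥ y) = (∑ i ∈ S, y i) ^ 2 - ∑ i ∈ S, (y i) ^ 2 := by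
        rw [expand, Finset.sum_congr rfl inner, Finset.sum_sub_distrib]
        congr 1
        rw [sq, Finset.sum_mul]
        exact Finset.sum_congr rfl fun i _ => by rw [Finset.mul_sum]
      -- now conclude
      set s := ∑ i ∈ S, y i
      set q := ∑ i ∈ S, (y i) ^ 2 with hqdef
      have hCS : s ^ 2 ≤ (S.card : ℝ) * q := by
        have := sq_sum_le_card_mul_sum_sq (s := S) (f := y)
        exact_mod_cast this
      have hq0 : 0 ≤ q := Finset.sum_nonneg fun i _ => sq_nonneg _
      have hkw' : (S.card : ℝ) ≤ (w : ℝ) := by exact_mod_cast hkw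
      rw [hq, hsum]
      nlinarith [hCS, hq0, hkw', sq_nonneg s]
    · -- not a clique: shift mass
      push_neg at hclq
      obtain ⟨i, hi, j, hj, hij, hnadj⟩ := hclq
      have key : ∀ a b : Fin n, a ∈ S → b ∈ S → a ≠ b → ¬ G.Adj a b →
          (A *ᵥ y) b ≤ (A *ᵥ y) a →
          (w : ℝ) * (y ⬝ᵥ (A *ᵥ y)) ≤ ((w : ℝ) - 1) * (∑ i, y i) ^ 2 := by
        intro a b ha hb hab hnadj hle
        set y' : Fin n → ℝ := y + (y b) • (Pi.single a 1 - Pi.single b 1) with hy'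
        have hya : y' a = y a + y b := by
          simp [hy', Pi.single_apply, hab, Ne.symm hab]
        have hyb : y' b = 0 := by
          simp [hy', Pi.single_apply, hab, Ne.symm hab]
        have hyother : ∀ p, p ≠ a → p ≠ b → y' p = y p := by
          intro p hpa hpb
          simp [hy', Pi.single_apply, hpa, hpb]
        have hy'nn : ∀ p, 0 ≤ y' p := by
          intro p
          by_cases hpa : p = a
          · subst hpa; rw [hya]; have := hy p; have := hy b; linarith
          by_cases hpb : p = b
          · subst hpb; rw [hyb]
          · rw [hyother p hpa hpb]; exact hy p
        have hsupp : (Finset.univ.filter fun p => y' p ≠ 0) ⊆ S.erase b := by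
          intro p hp
          simp only [Finset.mem_filter, Finset.mem_univ, true_and] at hp
          rw [Finset.mem_erase]
          constructor
          · intro hpb; subst hpb; exact hp hyb
          · by_cases hpa : p = a
            · subst hpa; exact ha
            · by_cases hpb : p = b
              · subst hpb; exact absurd hyb hp
              · rw [hmemS]; rw [hyother p hpa hpb] at hp; exact hp
        have hcard' : (Finset.univ.filter fun p => y' p ≠ 0).card ≤ k := by
          have h1 := Finset.card_le_card hsupp
          have h2 : (S.erase b).card = S.card - 1 := Finset.card_erase_of_mem hb
          have h3 : 1 ≤ S.card := Finset.card_pos.2 ⟨b, hb⟩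
          omega
        have hsum' : ∑ p, y' p = ∑ p, y p := by
          simp [hy', Finset.sum_add_distrib, Finset.sum_sub_distrib, Pi.single_apply, mul_sub, Finset.sum_ite_eq']
        have hAaa : A a a = 0 := by simp [hA]
        have hAbb : A b b = 0 := by simp [hA]
        have hAab : A a b = 0 := by simp [hA, SimpleGraph.adjMatrix_apply, hnadj]
        have hQ : y ⬝ᵥ (A *ᵥ y) ≤ y' ⬝ᵥ (A *ᵥ y') := by
          rw [hy', quad_shift A hs a b hAaa hAbb hAab y (y b)]
          nlinarith [hy b, hle]
        calc (w : ℝ) * (y ⬝ᵥ (A *ᵥ y)) ≤ (w : ℝ) * (y' ⬝ᵥ (A *ᵥ y')) := by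
              apply mul_le_mul_of_nonneg_left hQ (by positivity)
          _ ≤ ((w : ℝ) - 1) * (∑ p, y' p) ^ 2 := ih y' hy'nn hcard'
          _ = ((w : ℝ) - 1) * (∑ p, y p) ^ 2 := by rw [hsum']
      rcases le_total ((A *ᵥ y) j) ((A *ᵥ y) i) with h | h
      · exact key i j hi hj hij hnadj h
      · exact key j i hj hi (Ne.symm hij) (fun hadj => hnadj hadj.symm) h


/-- A Hermitian quadratic form is real. -/
lemma herm_quad_real {n : ℕ} (M : Matrix (Fin n) (Fin n) ℂ) (hM : M.IsHermitian)
    (x : Fin n → ℂ) : (star x ⬝ᵥ (M *ᵥ x)).im = 0 := by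
  rw [← Complex.conj_eq_iff_im]
  simp only [dotProduct, mulVec, map_sum, _root_.map_mul, Finset.mul_sum, Pi.star_apply]
  rw [Finset.sum_comm]
  apply Finset.sum_congr rfl; intro i _
  apply Finset.sum_congr rfl; intro j _
  have hMij : (starRingEnd ℂ) (M j i) = M i j := by
    have := congrFun (congrFun hM i) j
    simpa [conjTranspose_apply] using this
  rw [hMij]
  simp only [Complex.star_def, Complex.conj_conj]
  ring

lemma herm_main {n : ℕ} (G : SimpleGraph (Fin n)) [DecidableRel G.Adj] (t : ℝ)
    (Z : Matrix (Fin n) (Fin n) ℂ) (hZ : Z.IsHermitian) :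
    (Z.trace • (1 : Matrix (Fin n) (Fin n) ℂ)
          - (t : ℂ) • Matrix.hadamard (G.adjMatrix ℂ) Z).IsHermitian := by
  have htr : star Z.trace = Z.trace := by
    rw [← Matrix.trace_conjTranspose, hZ]
  unfold Matrix.IsHermitian
  ext p q
  simp only [conjTranspose_apply, Matrix.sub_apply, Matrix.smul_apply, smul_eq_mul, star_sub, star_mul',
    one_apply, hadamard_apply]
  have h1 : star (if q = p then (1:ℂ) else 0) = if p = q then (1:ℂ) else 0 := by
    by_cases h : p = q <;> simp [h, eq_comm]
  have h2 : star (G.adjMatrix ℂ q p) = G.adjMatrix ℂ p q := by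
    have hco : G.Adj q p ↔ G.Adj p q := G.adj_comm q p
    by_cases h : G.Adj p q <;> simp [SimpleGraph.adjMatrix_apply, hco, h]
  have h3 : star (Z q p) = Z p q := by
    have := congrFun (congrFun hZ p) q
    simpa [conjTranspose_apply] using this
  rw [h1, h2, h3, htr, Complex.star_def, Complex.conj_ofReal]

lemma backward_dir {n : ℕ} (G : SimpleGraph (Fin n)) [DecidableRel G.Adj]
    (w : ℕ) (hw : 2 ≤ w)
    (hmax : ∀ (m : ℕ) (s : Finset (Fin n)), G.IsNClique m s → m ≤ w)
    (t : ℝ) (ht : 0 ≤ t) (htw : t * ((w : ℝ) - 1) ≤ (w : ℝ))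
    (Z : Matrix (Fin n) (Fin n) ℂ) (hZ : Z.PosSemidef) :
    (Z.trace • (1 : Matrix (Fin n) (Fin n) ℂ)
      - (t : ℂ) • Matrix.hadamard (G.adjMatrix ℂ) Z).PosSemidef := by
  set A : Matrix (Fin n) (Fin n) ℂ := G.adjMatrix ℂ with hAdef
  refine PosSemidef.of_dotProduct_mulVec_nonneg (herm_main G t Z hZ.1) fun x => ?_
  rw [Complex.nonneg_iff]
  refine ⟨?_, (herm_quad_real _ (herm_main G t Z hZ.1) x).symm⟩
  obtain ⟨B, hB⟩ : ∃ B : Matrix (Fin n) (Fin n) ℂ, Z = Bᴴ * B := by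
    open scoped MatrixOrder in
    obtain ⟨B, hB'⟩ := CStarAlgebra.nonneg_iff_eq_star_mul_self.mp hZ.nonneg
    exact ⟨B, by rw [hB', star_eq_conjTranspose]⟩
  have hform : star x ⬝ᵥ ((Z.trace • (1 : Matrix (Fin n) (Fin n) ℂ)
        - (t : ℂ) • Matrix.hadamard A Z) *ᵥ x)
      = Z.trace * (star x ⬝ᵥ x) - (t : ℂ) * (star x ⬝ᵥ (Matrix.hadamard A Z *ᵥ x)) := by
    rw [sub_mulVec, dotProduct_sub, smul_mulVec, smul_mulVec, one_mulVec,
      dotProduct_smul, dotProduct_smul]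
    simp [smul_eq_mul]
  set y : Fin n → Fin n → ℂ := fun k i => B k i * x i with hy
  set a : Fin n → Fin n → ℝ := fun k i => ‖y k i‖ with ha
  have hZij : ∀ i j, Z i j = ∑ k, star (B k i) * B k j := by
    intro i j; rw [hB]; simp [Matrix.mul_apply, conjTranspose_apply]
  -- split the hadamard quadratic form into rank-one pieces
  have lhs_eq : star x ⬝ᵥ (Matrix.hadamard A Z *ᵥ x)
      = ∑ i, ∑ j, ∑ k, A i j * (star (x i) * star (B k i) * (B k j * x j)) := by
    simp only [dotProduct, mulVec, hadamard_apply, Pi.star_apply]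
    apply Finset.sum_congr rfl; intro i _
    rw [Finset.mul_sum]
    apply Finset.sum_congr rfl; intro j _
    rw [hZij i j, Finset.mul_sum, Finset.sum_mul, Finset.mul_sum]
    apply Finset.sum_congr rfl; intro k _
    ring
  have rhs_eq : ∀ k, star (y k) ⬝ᵥ (A *ᵥ y k)
      = ∑ i, ∑ j, A i j * (star (x i) * star (B k i) * (B k j * x j)) := by
    intro k
    simp only [dotProduct, mulVec, Pi.star_apply, Finset.mul_sum, hy, star_mul']
    apply Finset.sum_congr rfl; intro i _
    apply Finset.sum_congr rfl; intro j _
    ring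
  have hsplit : star x ⬝ᵥ (Matrix.hadamard A Z *ᵥ x) = ∑ k, star (y k) ⬝ᵥ (A *ᵥ y k) := by
    rw [lhs_eq]
    have step1 : ∀ i : Fin n, (∑ j, ∑ k, A i j * (star (x i) * star (B k i) * (B k j * x j)))
        = ∑ k, ∑ j, A i j * (star (x i) * star (B k i) * (B k j * x j)) :=
      fun i => Finset.sum_comm
    rw [Finset.sum_congr rfl fun i _ => step1 i, Finset.sum_comm]
    exact Finset.sum_congr rfl fun k _ => (rhs_eq k).symm
  -- real quantities
  set T : ℝ := ∑ k, ∑ i, Complex.normSq (B k i) with hT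
  set X : ℝ := ∑ j, Complex.normSq (x j) with hX
  have htr : Z.trace = (T : ℂ) := by
    rw [hB, Matrix.trace, hT]
    push_cast
    rw [Finset.sum_comm]
    apply Finset.sum_congr rfl; intro i _
    simp only [Matrix.diag_apply, Matrix.mul_apply, conjTranspose_apply]
    apply Finset.sum_congr rfl; intro k _
    rw [Complex.star_def, mul_comm, Complex.mul_conj]
  have hxx : star x ⬝ᵥ x = (X : ℂ) := by
    rw [hX]
    push_cast
    simp only [dotProduct, Pi.star_apply]
    apply Finset.sum_congr rfl; intro j _
    rw [Complex.star_def, mul_comm, Complex.mul_conj]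
  -- the real part
  have hre : (star x ⬝ᵥ ((Z.trace • (1 : Matrix (Fin n) (Fin n) ℂ)
        - (t : ℂ) • Matrix.hadamard A Z) *ᵥ x)).re
      = T * X - t * ∑ k, (star (y k) ⬝ᵥ (A *ᵥ y k)).re := by
    rw [hform, hsplit, htr, hxx, ← Complex.ofReal_mul]
    simp [Complex.sub_re, Complex.mul_re, Complex.re_sum]
  rw [hre]
  -- per-k bounds
  have key : ∀ k, t * (star (y k) ⬝ᵥ (A *ᵥ y k)).re ≤ (∑ i, Complex.normSq (B k i)) * X := by
    intro k
    set sk : ℝ := ∑ i, a k i with hsk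
    set Qk : ℝ := a k ⬝ᵥ (G.adjMatrix ℝ *ᵥ a k) with hQk
    have hank : ∀ i, 0 ≤ a k i := fun i => norm_nonneg _
    -- re bound against the real quadratic form
    have hreQ : (star (y k) ⬝ᵥ (A *ᵥ y k)).re ≤ Qk := by
      have e1 : star (y k) ⬝ᵥ (A *ᵥ y k) = ∑ i, ∑ j, A i j * (star (y k i) * y k j) := by
        simp only [dotProduct, mulVec, Pi.star_apply, Finset.mul_sum]
        apply Finset.sum_congr rfl; intro i _
        apply Finset.sum_congr rfl; intro j _
        ring
      have e2 : Qk = ∑ i, ∑ j, (G.adjMatrix ℝ) i j * (a k i * a k j) := by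
        simp only [hQk, dotProduct, mulVec, Finset.mul_sum]
        apply Finset.sum_congr rfl; intro i _
        apply Finset.sum_congr rfl; intro j _
        ring
      rw [e1, e2, Complex.re_sum]
      apply Finset.sum_le_sum; intro i _
      rw [Complex.re_sum]
      apply Finset.sum_le_sum; intro j _
      by_cases hadj : G.Adj i j
      · simp only [hAdef, SimpleGraph.adjMatrix_apply, hadj, if_true, one_mul]
        calc (star (y k i) * y k j).re ≤ ‖star (y k i) * y k j‖ :=
              Complex.re_le_norm _
          _ = a k i * a k j := by
              rw [norm_mul, ha]; simp
      · simp [hAdef, SimpleGraph.adjMatrix_apply, hadj]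
    -- Motzkin-Straus bound
    have hMS := motzkin_straus G w (le_trans (by norm_num) hw) hmax (a k) hank
    have hQk0 : (w:ℝ) * (t * Qk) ≤ (w:ℝ) * sk ^ 2 := by
      calc (w:ℝ) * (t * Qk) = t * ((w:ℝ) * Qk) := by ring
        _ ≤ t * (((w:ℝ) - 1) * sk ^ 2) := by
            apply mul_le_mul_of_nonneg_left _ ht
            rw [hsk]; exact hMS
        _ = (t * ((w:ℝ) - 1)) * sk ^ 2 := by ring
        _ ≤ (w:ℝ) * sk ^ 2 := mul_le_mul_of_nonneg_right htw (sq_nonneg _)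
    have hw0 : (0:ℝ) < (w:ℝ) := by exact_mod_cast Nat.pos_of_ne_zero (by omega)
    have htQ : t * Qk ≤ sk ^ 2 := le_of_mul_le_mul_left hQk0 hw0
    -- Cauchy-Schwarz
    have hCS : sk ^ 2 ≤ (∑ i, Complex.normSq (B k i)) * X := by
      have := Finset.sum_mul_sq_le_sq_mul_sq Finset.univ
        (fun i => ‖B k i‖) (fun i => ‖x i‖)
      rw [hsk, hX]
      have e3 : ∀ i, a k i = ‖B k i‖ * ‖x i‖ := by
        intro i; rw [ha]; simp [hy, norm_mul]
      rw [Finset.sum_congr rfl fun i _ => e3 i]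
      calc (∑ i, ‖B k i‖ * ‖x i‖) ^ 2
          ≤ (∑ i, ‖B k i‖ ^ 2) * ∑ i, ‖x i‖ ^ 2 := this
        _ = (∑ i, Complex.normSq (B k i)) * ∑ j, Complex.normSq (x j) := by
            simp [Complex.sq_norm]
    calc t * (star (y k) ⬝ᵥ (A *ᵥ y k)).re ≤ t * Qk :=
          mul_le_mul_of_nonneg_left hreQ ht
      _ ≤ sk ^ 2 := htQ
      _ ≤ (∑ i, Complex.normSq (B k i)) * X := hCS
  have : t * ∑ k, (star (y k) ⬝ᵥ (A *ᵥ y k)).re ≤ T * X := by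
    rw [Finset.mul_sum, hT, Finset.sum_mul]
    exact Finset.sum_le_sum fun k _ => key k
  linarith

lemma forward_dir {n : ℕ} (G : SimpleGraph (Fin n)) [DecidableRel G.Adj]
    (w : ℕ) (hw : 2 ≤ w)
    (hclique : ∃ s : Finset (Fin n), G.IsNClique w s)
    (t : ℝ)
    (H : ∀ Z : Matrix (Fin n) (Fin n) ℂ, Z.PosSemidef →
        (Z.trace • (1 : Matrix (Fin n) (Fin n) ℂ)
          - (t : ℂ) • Matrix.hadamard (G.adjMatrix ℂ) Z).PosSemidef) :
    t * ((w : ℝ) - 1) ≤ (w : ℝ) := by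
  obtain ⟨S, hS⟩ := hclique
  have hSclq := hS.1
  have hScard : S.card = w := hS.2
  set v : Fin n → ℂ := fun i => if i ∈ S then 1 else 0 with hv
  have hvstar : ∀ i, star (v i) = v i := by
    intro i; by_cases h : i ∈ S <;> simp [hv, h]
  have hv2 : ∀ i, v i * v i = v i := by
    intro i; by_cases h : i ∈ S <;> simp [hv, h]
  set Z : Matrix (Fin n) (Fin n) ℂ := Matrix.of fun i j => v i * star (v j) with hZ
  have hZpsd : Z.PosSemidef := by
    apply PosSemidef.of_dotProduct_mulVec_nonneg
    · ext i j
      simp only [hZ, conjTranspose_apply, Matrix.of_apply, star_mul', star_star, hvstar]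
      rw [mul_comm]
    · intro x
      have hmv : Z *ᵥ x = fun i => v i * (star v ⬝ᵥ x) := by
        funext i
        simp only [hZ, mulVec, dotProduct, Matrix.of_apply, Finset.mul_sum, Pi.star_apply]
        apply Finset.sum_congr rfl; intro j _; ring
      rw [hmv]
      have : star x ⬝ᵥ (fun i => v i * (star v ⬝ᵥ x)) = star (star v ⬝ᵥ x) * (star v ⬝ᵥ x) := by
        simp only [dotProduct, Pi.star_apply, star_sum, _root_.star_mul', star_star]
        rw [Finset.sum_mul]
        apply Finset.sum_congr rfl; intro i _
        simp only [hvstar]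
        ring
      rw [this]
      exact star_mul_self_nonneg _
  have hM := (H Z hZpsd).dotProduct_mulVec_nonneg v
  -- trace of Z
  have hvsum : ∑ i, v i = (w : ℂ) := by
    rw [hv, ← hScard]
    simp [Finset.sum_ite_mem, Finset.univ_inter]
  have htr : Z.trace = (w : ℂ) := by
    rw [Matrix.trace, ← hvsum]
    apply Finset.sum_congr rfl; intro i _
    simp only [Matrix.diag_apply, hZ, Matrix.of_apply]
    rw [hvstar, hv2]
  -- star v ⬝ᵥ v
  have hvv : star v ⬝ᵥ v = (w : ℂ) := by
    rw [dotProduct, ← hvsum]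
    apply Finset.sum_congr rfl; intro i _
    rw [Pi.star_apply, hvstar, hv2]
  -- hadamard part
  have hhad : star v ⬝ᵥ (Matrix.hadamard (G.adjMatrix ℂ) Z *ᵥ v) = (w : ℂ) * ((w : ℂ) - 1) := by
    have e1 : star v ⬝ᵥ (Matrix.hadamard (G.adjMatrix ℂ) Z *ᵥ v)
        = ∑ i, ∑ j, (G.adjMatrix ℂ) i j * (v i * v j) := by
      simp only [dotProduct, mulVec, hadamard_apply, Pi.star_apply, Finset.mul_sum]
      apply Finset.sum_congr rfl; intro i _
      apply Finset.sum_congr rfl; intro j _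
      rw [hvstar]
      simp only [hZ, Matrix.of_apply]
      rw [hvstar]
      rw [show v i * ((G.adjMatrix ℂ) i j * (v i * v j) * v j)
            = (G.adjMatrix ℂ) i j * ((v i * v i) * (v j * v j)) by ring, hv2 i, hv2 j]
    rw [e1]
    have e2 : ∀ i j : Fin n, (G.adjMatrix ℂ) i j * (v i * v j)
        = if i ∈ S then (if j ∈ S then (G.adjMatrix ℂ) i j else 0) else 0 := by
      intro i j
      by_cases hi : i ∈ S <;> by_cases hj : j ∈ S <;> simp [hv, hi, hj]
    simp only [e2]
    have e3 : ∀ i ∈ S, ∑ j, (if j ∈ S then (G.adjMatrix ℂ) i j else 0) = (w : ℂ) - 1 := by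
      intro i hi
      rw [Finset.sum_ite_mem, Finset.univ_inter]
      have e4 : ∀ j ∈ S, (G.adjMatrix ℂ) i j = (1 : ℂ) - (if j = i then 1 else 0) := by
        intro j hj
        by_cases hji : j = i
        · subst hji; simp
        · have hadj : G.Adj i j :=
            hSclq (Finset.mem_coe.mpr hi) (Finset.mem_coe.mpr hj) (Ne.symm hji)
          simp [hadj, hji]
      rw [Finset.sum_congr rfl e4, Finset.sum_sub_distrib, Finset.sum_const,
        Finset.sum_ite_eq' S i (fun _ => (1:ℂ))]
      simp [hi, hScard]
    calc ∑ i, ∑ j, (if i ∈ S then (if j ∈ S then (G.adjMatrix ℂ) i j else 0) else 0)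
        = ∑ i, (if i ∈ S then ∑ j, (if j ∈ S then (G.adjMatrix ℂ) i j else 0) else 0) := by
          apply Finset.sum_congr rfl; intro i _
          split_ifs with hi
          · rfl
          · simp
      _ = ∑ i ∈ S, ∑ j, (if j ∈ S then (G.adjMatrix ℂ) i j else 0) := by
          rw [Finset.sum_ite_mem, Finset.univ_inter]
      _ = ∑ i ∈ S, ((w : ℂ) - 1) := Finset.sum_congr rfl e3
      _ = (w : ℂ) * ((w : ℂ) - 1) := by
          rw [Finset.sum_const, hScard, nsmul_eq_mul]
  -- final computation
  have hform : star v ⬝ᵥ ((Z.trace • (1 : Matrix (Fin n) (Fin n) ℂ)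
        - (t : ℂ) • Matrix.hadamard (G.adjMatrix ℂ) Z) *ᵥ v)
      = (((w : ℝ) * w - t * (w * (w - 1)) : ℝ) : ℂ) := by
    rw [sub_mulVec, dotProduct_sub, smul_mulVec, smul_mulVec, one_mulVec,
      dotProduct_smul, dotProduct_smul, smul_eq_mul, smul_eq_mul, hhad, htr, hvv]
    push_cast
    ring
  rw [hform] at hM
  have hre : (0:ℝ) ≤ (w : ℝ) * w - t * (w * (w - 1)) := by
    exact_mod_cast hM
  have hwR : (2:ℝ) ≤ (w : ℝ) := by exact_mod_cast hw
  nlinarith [hre, hwR]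


theorem stmt10 {n : ℕ} (G : SimpleGraph (Fin n)) [DecidableRel G.Adj]
    (hedge : ∃ u v, G.Adj u v)
    (w : ℕ) (hw : 2 ≤ w)
    (hclique : ∃ s : Finset (Fin n), G.IsNClique w s)
    (hmax : ∀ (m : ℕ) (s : Finset (Fin n)), G.IsNClique m s → m ≤ w)
    (t : ℝ) (ht : 0 ≤ t) :
    (∀ Z : Matrix (Fin n) (Fin n) ℂ, Z.PosSemidef →
        (Z.trace • (1 : Matrix (Fin n) (Fin n) ℂ)
          - (t : ℂ) • Matrix.hadamard (G.adjMatrix ℂ) Z).PosSemidef)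
      ↔ t * ((w : ℝ) - 1) ≤ (w : ℝ) := by
  constructor
  · intro H
    exact forward_dir G w hw hclique t H
  · intro htw Z hZ
    exact backward_dir G w hw hmax t ht htw Z hZ

end
end

section
/- Let G be a finite simple graph on n vertices with at least one edge, let A_G be its adjacency matrix, let ω = ω(G) ≥ 2 be its clique number, and let J be the n×n all-ones matrix. Then for every t ∈ ℝ, the real symmetric matrix J − t·A_G is copositive if and only if t·(ω − 1) ≤ ω (i.e., t ≤ ω/(ω−1)). -/
open Matrix
open scoped ComplexOrder
open Finset

noncomputable section

noncomputable section MSaux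

variable {n : ℕ} (G : SimpleGraph (Fin n)) [DecidableRel G.Adj]

def aw (i j : Fin n) : ℝ := if G.Adj i j then 1 else 0

def qf (x : Fin n → ℝ) : ℝ := ∑ i, ∑ j, aw G i j * (x i * x j)

variable {G}

lemma aw_symm (i j : Fin n) : aw G i j = aw G j i := by
  simp [aw, G.adj_comm]

lemma aw_diag (i : Fin n) : aw G i i = 0 := by simp [aw]

lemma aw_nonneg (i j : Fin n) : 0 ≤ aw G i j := by
  unfold aw; split <;> norm_num

lemma aw_le_one (i j : Fin n) : aw G i j ≤ 1 := by
  unfold aw; split <;> norm_num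

lemma qf_nonneg {x : Fin n → ℝ} (hx : ∀ i, 0 ≤ x i) : 0 ≤ qf G x := by
  refine Finset.sum_nonneg fun i _ => Finset.sum_nonneg fun j _ => ?_
  exact mul_nonneg (aw_nonneg i j) (mul_nonneg (hx i) (hx j))

/-- Quadratic expansion of `qf` along a direction. -/
lemma qf_expand (x d : Fin n → ℝ) (s : ℝ) :
    qf G (fun i => x i + s * d i)
      = qf G x + 2 * s * (∑ i, d i * ∑ j, aw G i j * x j)
        + s ^ 2 * qf G d := by
  have hswap : (∑ i, ∑ j, aw G i j * (x i * d j))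
      = ∑ i, d i * ∑ j, aw G i j * x j := by
    rw [Finset.sum_comm]
    refine Finset.sum_congr rfl fun j _ => ?_
    rw [Finset.mul_sum]
    refine Finset.sum_congr rfl fun i _ => ?_
    rw [aw_symm i j]; ring
  have hswap2 : (∑ i, ∑ j, aw G i j * (d i * x j))
      = ∑ i, d i * ∑ j, aw G i j * x j := by
    refine Finset.sum_congr rfl fun i _ => ?_
    rw [Finset.mul_sum]
    refine Finset.sum_congr rfl fun j _ => ?_
    ring
  have : qf G (fun i => x i + s * d i)
      = ∑ i, ∑ j, (aw G i j * (x i * x j) + s * (aw G i j * (d i * x j))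
        + s * (aw G i j * (x i * d j)) + s ^ 2 * (aw G i j * (d i * d j))) := by
    refine Finset.sum_congr rfl fun i _ => Finset.sum_congr rfl fun j _ => ?_
    ring
  rw [this]
  simp only [Finset.sum_add_distrib, ← Finset.mul_sum]
  rw [hswap, hswap2]
  unfold qf
  ring

def dir (u v : Fin n) : Fin n → ℝ := fun i =>
  (if i = v then 1 else 0) - (if i = u then 1 else 0)

lemma sum_dir_mul (u v : Fin n) (f : Fin n → ℝ) :
    ∑ i, dir u v i * f i = f v - f u := by
  simp [dir, sub_mul, Finset.sum_sub_distrib, ite_mul, Finset.sum_ite_eq']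

lemma qf_dir (u v : Fin n) (hne : u ≠ v) (hadj : ¬ G.Adj u v) :
    qf G (dir u v) = 0 := by
  have hvu : aw G v u = 0 := by simp [aw, G.adj_comm, hadj]
  have huv : aw G u v = 0 := by simp [aw, hadj]
  unfold qf
  have : ∀ i, ∑ j, aw G i j * (dir u v i * dir u v j)
      = dir u v i * (aw G i v - aw G i u) := by
    intro i
    have : ∑ j, aw G i j * (dir u v i * dir u v j)
        = dir u v i * ∑ j, dir u v j * aw G i j := by
      rw [Finset.mul_sum]; exact Finset.sum_congr rfl fun j _ => by ring
    rw [this, sum_dir_mul]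
  simp only [this]
  rw [sum_dir_mul]  -- careful: pattern ∑ i, dir u v i * g i
  rw [aw_diag, aw_diag, huv, hvu]
  ring

/-- shift step: move weight from u to v when it doesn't decrease qf -/
lemma shift_step (x : Fin n → ℝ) (hx : ∀ i, 0 ≤ x i) (u v : Fin n)
    (hu : x u ≠ 0) (hv : x v ≠ 0) (hne : u ≠ v) (hadj : ¬ G.Adj u v)
    (hle : ∑ j, aw G u j * x j ≤ ∑ j, aw G v j * x j) :
    ∃ y : Fin n → ℝ, (∀ i, 0 ≤ y i) ∧ (∑ i, y i = ∑ i, x i) ∧ qf G x ≤ qf G y ∧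
      Finset.filter (fun i => y i ≠ 0) Finset.univ
        ⊆ (Finset.filter (fun i => x i ≠ 0) Finset.univ).erase u := by
  refine ⟨fun i => x i + x u * dir u v i, ?_, ?_, ?_, ?_⟩
  · intro i
    by_cases hiu : i = u
    · subst hiu; simp [dir, hne, Ne.symm hne]
    · by_cases hiv : i = v
      · have hiu2 : i ≠ u := by rw [hiv]; exact Ne.symm hne
        have h1 := hx i; have h2 := hx u
        have hd : dir u v i = 1 := by simp [dir, hiv, hiu2, Ne.symm hne]
        show 0 ≤ x i + x u * dir u v i
        rw [hd]; linarith
      · simp [dir, hiu, hiv, hx i]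
  · rw [Finset.sum_add_distrib, ← Finset.mul_sum]
    have : ∑ i, dir u v i = 0 := by
      simp [dir, Finset.sum_sub_distrib, hne]
    rw [this]; ring
  · rw [qf_expand x (dir u v) (x u), qf_dir u v hne hadj, sum_dir_mul]
    have h1 : 0 ≤ 2 * x u * ((∑ j, aw G v j * x j) - ∑ j, aw G u j * x j) := by
      have := hx u
      nlinarith [sub_nonneg.mpr hle]
    nlinarith
  · intro i hi
    simp only [Finset.mem_filter, Finset.mem_univ, true_and] at hi
    rw [Finset.mem_erase]
    have hiu : i ≠ u := by
      intro h; subst h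
      apply hi; simp [dir, hne, Ne.symm hne]
    refine ⟨hiu, ?_⟩
    simp only [Finset.mem_filter, Finset.mem_univ, true_and]
    by_cases hiv : i = v
    · subst hiv; exact hv
    · intro h; apply hi; simp [dir, hiu, hiv, h]

end MSaux

noncomputable section MSmain

variable {n : ℕ} {G : SimpleGraph (Fin n)} [DecidableRel G.Adj]

lemma motzkin_straus_s11 (w : ℕ) (hw : 1 ≤ w)
    (hcl : ∀ s : Finset (Fin n), G.IsClique (↑s : Set (Fin n)) → s.card ≤ w) :
    ∀ (k : ℕ) (x : Fin n → ℝ), (∀ i, 0 ≤ x i) →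
      (Finset.filter (fun i => x i ≠ 0) Finset.univ).card ≤ k →
      (w : ℝ) * qf G x ≤ ((w : ℝ) - 1) * (∑ i, x i) ^ 2 := by
  intro k
  induction k with
  | zero =>
    intro x hx hc
    have hz : ∀ i, x i = 0 := by
      intro i
      by_contra h
      have : i ∈ Finset.filter (fun i => x i ≠ 0) Finset.univ := by
        simp [h]
      have := Finset.card_pos.mpr ⟨i, this⟩
      omega
    have h1 : qf G x = 0 := by
      unfold qf; simp [hz]
    have h2 : (∑ i, x i) = 0 := by simp [hz]
    rw [h1, h2]; simp
  | succ k ih =>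
    intro x hx hc
    set s := Finset.filter (fun i => x i ≠ 0) Finset.univ with hs
    by_cases hcliq : G.IsClique (↑s : Set (Fin n))
    · -- clique case
      have hcard : s.card ≤ w := hcl s hcliq
      have hsum : ∑ i, x i = ∑ i ∈ s, x i := by
        rw [hs, Finset.sum_filter_ne_zero]
      have hsq : ∑ i ∈ s, x i ^ 2 = ∑ i, x i ^ 2 := by
        refine Finset.sum_subset (Finset.subset_univ s) fun i _ hi => ?_
        have : x i = 0 := by
          by_contra h; exact hi (by simp [hs, h])
        simp [this]
      have hcs : (∑ i, x i) ^ 2 ≤ (s.card : ℝ) * ∑ i, x i ^ 2 := by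
        rw [hsum, ← hsq]
        have := sq_sum_le_card_mul_sum_sq (s := s) (f := x)
        exact_mod_cast this
      have hT : 0 ≤ ∑ i, x i ^ 2 := Finset.sum_nonneg fun i _ => sq_nonneg _
      have hqf : qf G x ≤ (∑ i, x i) ^ 2 - ∑ i, x i ^ 2 := by
        have hle : qf G x ≤ ∑ i, ∑ j, (if i = j then 0 else x i * x j) := by
          refine Finset.sum_le_sum fun i _ => Finset.sum_le_sum fun j _ => ?_
          by_cases hij : i = j
          · subst hij; simp [aw_diag]
          · simp only [if_neg hij]
            have := mul_nonneg (hx i) (hx j)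
            nlinarith [aw_le_one (G := G) i j, aw_nonneg (G := G) i j]
        have heq : (∑ i, ∑ j, (if i = j then 0 else x i * x j))
            = (∑ i, x i) ^ 2 - ∑ i, x i ^ 2 := by
          have h1 : ∀ i, (∑ j, (if i = j then 0 else x i * x j))
              = (∑ j, x i * x j) - x i ^ 2 := by
            intro i
            have : (∑ j, (if i = j then 0 else x i * x j))
                = (∑ j, (x i * x j - if i = j then x i * x j else 0)) := by
              refine Finset.sum_congr rfl fun j _ => ?_
              by_cases hij : i = j <;> simp [hij]
            rw [this, Finset.sum_sub_distrib]
            simp [Finset.sum_ite_eq, sq]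
          simp only [h1]
          rw [Finset.sum_sub_distrib, sq, Fintype.sum_mul_sum]
        rw [heq] at hle; exact hle
      have hwR : (1 : ℝ) ≤ (w : ℝ) := by exact_mod_cast hw
      have hcardR : (s.card : ℝ) ≤ (w : ℝ) := by exact_mod_cast hcard
      nlinarith [hcs, hqf, hT]
    · -- non-clique case
      rw [SimpleGraph.isClique_iff] at hcliq
      rw [Set.Pairwise] at hcliq
      push_neg at hcliq
      obtain ⟨u, hu, v, hv, hne, hadj⟩ := hcliq
      have hxu : x u ≠ 0 := (Finset.mem_filter.mp (Finset.mem_coe.mp hu)).2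
      have hxv : x v ≠ 0 := (Finset.mem_filter.mp (Finset.mem_coe.mp hv)).2
      have hus : u ∈ s := by simp [hs, hxu]
      have hvs : v ∈ s := by simp [hs, hxv]
      have key : ∃ y : Fin n → ℝ, (∀ i, 0 ≤ y i) ∧ (∑ i, y i = ∑ i, x i) ∧
          qf G x ≤ qf G y ∧
          (Finset.filter (fun i => y i ≠ 0) Finset.univ).card ≤ k := by
        by_cases hle : (∑ j, aw G u j * x j) ≤ ∑ j, aw G v j * x j
        · obtain ⟨y, h1, h2, h3, h4⟩ := shift_step x hx u v hxu hxv hne hadj hle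
          refine ⟨y, h1, h2, h3, ?_⟩
          have := Finset.card_le_card h4
          rw [Finset.card_erase_of_mem hus] at this
          have hcs : s.card ≤ k + 1 := hc
          omega
        · have hadj' : ¬ G.Adj v u := fun h => hadj h.symm
          obtain ⟨y, h1, h2, h3, h4⟩ := shift_step x hx v u hxv hxu (Ne.symm hne) hadj'
            (le_of_not_ge hle)
          refine ⟨y, h1, h2, h3, ?_⟩
          have := Finset.card_le_card h4
          rw [Finset.card_erase_of_mem hvs] at this
          have hcs : s.card ≤ k + 1 := hc
          omega
      obtain ⟨y, hy0, hysum, hyqf, hycard⟩ := key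
      have hIH := ih y hy0 hycard
      rw [hysum] at hIH
      have hwnn : (0 : ℝ) ≤ (w : ℝ) := by positivity
      have := mul_le_mul_of_nonneg_left hyqf hwnn
      linarith

end MSmain

section Final

variable {n : ℕ} {G : SimpleGraph (Fin n)} [DecidableRel G.Adj]

lemma form_eq (t : ℝ) (x : Fin n → ℝ) :
    x ⬝ᵥ (((Matrix.of fun _ _ => (1 : ℝ)) - t • G.adjMatrix ℝ) *ᵥ x)
      = (∑ i, x i) ^ 2 - t * qf G x := by
  unfold qf
  simp only [dotProduct, mulVec, Matrix.sub_apply, Matrix.of_apply, Matrix.smul_apply,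
    SimpleGraph.adjMatrix_apply, smul_eq_mul]
  have h1 : ∀ i, x i * (∑ j, ((1 : ℝ) - t * (if G.Adj i j then (1:ℝ) else 0)) * x j)
      = (∑ j, x i * x j) - t * ∑ j, aw G i j * (x i * x j) := by
    intro i
    calc x i * (∑ j, ((1 : ℝ) - t * (if G.Adj i j then (1:ℝ) else 0)) * x j)
        = ∑ j, (x i * x j - t * (aw G i j * (x i * x j))) := by
          rw [Finset.mul_sum]
          refine Finset.sum_congr rfl fun j _ => ?_
          unfold aw; ring
      _ = (∑ j, x i * x j) - t * ∑ j, aw G i j * (x i * x j) := by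
          rw [Finset.sum_sub_distrib]
          congr 1
          exact (Finset.mul_sum _ _ _).symm
  calc ∑ i, x i * ∑ j, ((1 : ℝ) - t * (if G.Adj i j then (1:ℝ) else 0)) * x j
      = ∑ i, ((∑ j, x i * x j) - t * ∑ j, aw G i j * (x i * x j)) :=
        Finset.sum_congr rfl fun i _ => h1 i
    _ = (∑ i, x i) ^ 2 - t * ∑ i, ∑ j, aw G i j * (x i * x j) := by
        rw [Finset.sum_sub_distrib, sq, Fintype.sum_mul_sum]
        congr 1
        exact (Finset.mul_sum _ _ _).symm

end Final


theorem stmt11 {n : ℕ} (G : SimpleGraph (Fin n)) [DecidableRel G.Adj]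
    (hedge : ∃ u v, G.Adj u v)
    (w : ℕ) (hw : 2 ≤ w)
    (hclique : ∃ s : Finset (Fin n), G.IsNClique w s)
    (hmax : ∀ (m : ℕ) (s : Finset (Fin n)), G.IsNClique m s → m ≤ w)
    (t : ℝ) :
    Copositive ((Matrix.of fun _ _ => (1 : ℝ)) - t • G.adjMatrix ℝ)
      ↔ t * ((w : ℝ) - 1) ≤ (w : ℝ) := by
  have hcl : ∀ s : Finset (Fin n), G.IsClique (↑s : Set (Fin n)) → s.card ≤ w :=
    fun s hs => hmax s.card s ⟨hs, rfl⟩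
  have hw2 : (2 : ℝ) ≤ (w : ℝ) := by exact_mod_cast hw
  constructor
  · intro hcop
    obtain ⟨s, hsc⟩ := hclique
    set x : Fin n → ℝ := fun i => if i ∈ s then 1 else 0 with hxdef
    have hx : ∀ i, 0 ≤ x i := by
      intro i; rw [hxdef]; dsimp only; split <;> norm_num
    have h0 := hcop x hx
    rw [form_eq] at h0
    have hS : (∑ i, x i) = (w : ℝ) := by
      rw [hxdef]
      simp only [Finset.sum_ite_mem, Finset.univ_inter, Finset.sum_const, nsmul_eq_mul, mul_one]
      exact_mod_cast hsc.2
    have hqf : qf G x = (w : ℝ) * ((w : ℝ) - 1) := by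
      have h1 : qf G x = ∑ i ∈ s, ∑ j ∈ s, aw G i j := by
        unfold qf
        have hterm : ∀ i, (∑ j, aw G i j * (x i * x j))
            = if i ∈ s then (∑ j, if j ∈ s then aw G i j else 0) else 0 := by
          intro i
          by_cases hi : i ∈ s
          · rw [if_pos hi]
            refine Finset.sum_congr rfl fun j _ => ?_
            by_cases hj : j ∈ s <;> simp [hxdef, hi, hj]
          · rw [if_neg hi]
            refine Finset.sum_eq_zero fun j _ => ?_
            simp [hxdef, hi]
        simp only [hterm]
        simp [Finset.sum_ite_mem]
      have h2 : ∀ i ∈ s, ∑ j ∈ s, aw G i j = (w : ℝ) - 1 := by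
        intro i hi
        have hterm : ∀ j ∈ s, aw G i j = 1 - (if j = i then 1 else 0) := by
          intro j hj
          by_cases hji : j = i
          · rw [hji]; simp [aw_diag, hji]
          · have hadj : G.Adj i j :=
              hsc.1 (Finset.mem_coe.mpr hi) (Finset.mem_coe.mpr hj) (Ne.symm hji)
            simp [aw, hadj, hji]
        rw [Finset.sum_congr rfl hterm, Finset.sum_sub_distrib]
        rw [Finset.sum_ite_eq' s i (fun _ => (1 : ℝ))]
        simp only [if_pos hi, Finset.sum_const, nsmul_eq_mul, mul_one]
        rw [hsc.2]
      rw [h1, Finset.sum_congr rfl h2, Finset.sum_const, hsc.2, nsmul_eq_mul]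
    rw [hS, hqf] at h0
    nlinarith
  · intro ht x hx
    rw [form_eq]
    have hms := motzkin_straus_s11 w (by omega) hcl _ x hx le_rfl
    have hqf0 := qf_nonneg (G := G) hx
    rcases le_or_gt t 0 with h | h
    · nlinarith [sq_nonneg (∑ i, x i)]
    · nlinarith [mul_le_mul_of_nonneg_left hms (le_of_lt h),
        mul_le_mul_of_nonneg_right ht (sq_nonneg (∑ i, x i))]

end
end

section
/- Let G be a finite simple graph on n vertices with adjacency matrix A_G, and let λ > 0 be a real number such that λ·I − A_G is positive semidefinite (in particular this holds when λ is the largest eigenvalue of A_G). Then J − (1 + 1/λ)·A_G belongs to SPN_n, where J is the n×n all-ones matrix. Consequently σ(G) ≥ 1 + 1/λ(G). -/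
open Matrix
open scoped ComplexOrder

noncomputable section

theorem stmt12 {n : ℕ} (G : SimpleGraph (Fin n)) [DecidableRel G.Adj]
    (l : ℝ) (hl : 0 < l)
    (hpsd : (l • (1 : Matrix (Fin n) (Fin n) ℝ) - G.adjMatrix ℝ).PosSemidef) :
    SPN ((Matrix.of fun _ _ => (1 : ℝ)) - (1 + 1 / l) • G.adjMatrix ℝ) := by
  refine ⟨(1/l) • (l • (1 : Matrix (Fin n) (Fin n) ℝ) - G.adjMatrix ℝ),
    (Matrix.of fun _ _ => (1 : ℝ)) - G.adjMatrix ℝ - 1, ?_, ?_, ?_, ?_⟩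
  · ext i j
    simp only [Matrix.sub_apply, Matrix.add_apply, Matrix.smul_apply, Matrix.of_apply,
      Matrix.one_apply, smul_eq_mul]
    have hA : (G.adjMatrix ℝ) i j = if G.Adj i j then 1 else 0 := by
      simp [SimpleGraph.adjMatrix]
    by_cases h : i = j <;> by_cases hadj : G.Adj i j <;> simp [h, hA, hadj] <;> field_simp
  · constructor
    · unfold Matrix.IsHermitian
      rw [Matrix.conjTranspose_smul]
      congr 1
      exact hpsd.1
    · intro x
      exact (hpsd.smul (by positivity : (0:ℝ) ≤ 1 / l)).2 x
  · unfold Matrix.IsSymm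
    ext i j
    simp only [Matrix.transpose_apply, Matrix.sub_apply, Matrix.of_apply, Matrix.one_apply,
      SimpleGraph.adjMatrix_apply]
    rw [if_congr (G.adj_comm j i) rfl rfl, if_congr (eq_comm) rfl rfl]
  · intro i j
    by_cases h : i = j
    · simp [h, Matrix.one_apply]
    · have : (G.adjMatrix ℝ) i j ≤ 1 := by
        by_cases hadj : G.Adj i j <;> simp [hadj]
      simp only [Matrix.sub_apply, Matrix.of_apply, Matrix.one_apply, if_neg h]
      linarith

end
end

section
/- Let G be a finite simple triangle-free graph on n vertices (G contains no clique of size 3), with adjacency matrix A_G, and let J be the n×n all-ones matrix. Then J − 2·A_G belongs to SPN_n if and only if G is bipartite (i.e., 2-colorable). -/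
open Matrix
open scoped ComplexOrder

noncomputable section

/-- If every closed walk has even length, the graph is 2-colorable. -/
lemma colorable_two_of_even_closed_walks {V : Type*} (G : SimpleGraph V)
    (h : ∀ (u : V) (p : G.Walk u u), Even p.length) : G.Colorable 2 := by
  classical
  have key : ∀ {a b : V} (p q : G.Walk a b), (Odd p.length ↔ Odd q.length) := by
    intro a b p q
    have := h a (p.append q.reverse)
    rw [SimpleGraph.Walk.length_append, SimpleGraph.Walk.length_reverse] at this
    rw [Nat.even_add] at this
    rw [Nat.odd_iff, Nat.odd_iff, ← Nat.not_even_iff, ← Nat.not_even_iff]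
    tauto
  have hcard : Fintype.card Bool = 2 := by simp
  rw [← hcard]
  refine (SimpleGraph.Coloring.mk
    (fun v => decide (∃ p : G.Walk (G.connectedComponentMk v).out v, Odd p.length)) ?_).colorable
  intro u v huv
  have hcomp : G.connectedComponentMk u = G.connectedComponentMk v :=
    SimpleGraph.ConnectedComponent.connectedComponentMk_eq_of_adj huv
  beta_reduce
  rw [hcomp]
  simp only [ne_eq, decide_eq_decide]
  set r := (G.connectedComponentMk v).out with hr
  have hru : G.Reachable r u := by
    refine SimpleGraph.ConnectedComponent.exact ?_
    have h1 : G.connectedComponentMk r = G.connectedComponentMk v := Quot.out_eq _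
    exact h1.trans hcomp.symm
  obtain ⟨q⟩ := hru
  intro hiff
  rcases Nat.even_or_odd q.length with hq | hq
  · have hodd : Odd (q.concat huv).length := by
      rw [SimpleGraph.Walk.length_concat]; exact hq.add_one
    obtain ⟨p, hp⟩ := hiff.mpr ⟨q.concat huv, hodd⟩
    exact (Nat.not_even_iff_odd.mpr ((key p q).mp hp)) hq
  · have heven : ¬ Odd (q.concat huv).length := by
      rw [SimpleGraph.Walk.length_concat, Nat.not_odd_iff_even]; exact hq.add_one
    obtain ⟨p, hp⟩ := hiff.mp ⟨q, hq⟩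
    exact heven ((key p (q.concat huv)).mp hp)

lemma quad_expand {n : ℕ} (N : Matrix (Fin n) (Fin n) ℝ) {u v : Fin n} (huv : u ≠ v) :
    (Pi.single u 1 + Pi.single v 1) ⬝ᵥ (N *ᵥ (Pi.single u 1 + Pi.single v 1))
      = N u u + N u v + N v u + N v v := by
  simp [mulVec_add, mulVec_single, add_dotProduct, single_dotProduct, Pi.add_apply,
    huv, huv.symm]
  ring

theorem stmt13 {n : ℕ} (G : SimpleGraph (Fin n)) [DecidableRel G.Adj]
    (htf : G.CliqueFree 3) :
    SPN ((Matrix.of fun _ _ => (1 : ℝ)) - (2 : ℝ) • G.adjMatrix ℝ) ↔ G.Colorable 2 := by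
  classical
  set M : Matrix (Fin n) (Fin n) ℝ :=
    (Matrix.of fun _ _ => (1 : ℝ)) - (2 : ℝ) • G.adjMatrix ℝ with hM
  have hMapp : ∀ i j, M i j = 1 - 2 * (if G.Adj i j then (1:ℝ) else 0) := by
    intro i j
    simp [hM, Matrix.sub_apply, Matrix.smul_apply, SimpleGraph.adjMatrix_apply]
  constructor
  · rintro ⟨P, E, hME, hP, hE, hEnn⟩
    -- key facts for each edge
    have edgeP : ∀ {u v : Fin n}, G.Adj u v → (∀ k, P k u + P k v = 0) ∧ E u v = 0 := by
      intro u v huv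
      have hne : u ≠ v := G.ne_of_adj huv
      set x : Fin n → ℝ := Pi.single u 1 + Pi.single v 1 with hx
      have hxM : x ⬝ᵥ (M *ᵥ x) = 0 := by
        rw [hx, quad_expand M hne, hMapp, hMapp, hMapp, hMapp]
        simp [huv, huv.symm, G.irrefl]
        norm_num
      have hxP : (0:ℝ) ≤ x ⬝ᵥ (P *ᵥ x) := by simpa using hP.dotProduct_mulVec_nonneg x
      have hxE : x ⬝ᵥ (E *ᵥ x) = E u u + E u v + E v u + E v v := quad_expand E hne
      have hxE' : (0:ℝ) ≤ x ⬝ᵥ (E *ᵥ x) := by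
        rw [hxE]
        have := hEnn u u; have := hEnn u v; have := hEnn v u; have := hEnn v v
        linarith
      have hsum : x ⬝ᵥ (P *ᵥ x) + x ⬝ᵥ (E *ᵥ x) = 0 := by
        have : M *ᵥ x = P *ᵥ x + E *ᵥ x := by rw [hME, Matrix.add_mulVec]
        rw [← dotProduct_add, ← this, hxM]
      have hPz : x ⬝ᵥ (P *ᵥ x) = 0 := by linarith
      have hEz : x ⬝ᵥ (E *ᵥ x) = 0 := by linarith
      have hPx : P *ᵥ x = 0 := (hP.dotProduct_mulVec_zero_iff x).mp (by simpa using hPz)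
      constructor
      · intro k
        have := congrFun hPx k
        simpa [hx, mulVec_add, mulVec_single] using this
      · rw [hxE] at hEz
        have := hEnn u u; have := hEnn u v; have := hEnn v u; have := hEnn v v
        linarith
    -- column sign flip along walks
    have walkP : ∀ {a b : Fin n} (p : G.Walk a b) (k : Fin n),
        P k b = (-1:ℝ)^p.length * P k a := by
      intro a b p
      induction p with
      | nil => simp
      | cons h p ih =>
        intro k
        have h1 := (edgeP h).1 k
        have h2 : ∀ x y : ℝ, x + y = 0 → y = -x := fun x y hxy => by linarith
        rw [SimpleGraph.Walk.length_cons, ih k, pow_succ, h2 _ _ h1]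
        ring
    -- all closed walks are even
    have heven : ∀ (u : Fin n) (p : G.Walk u u), Even p.length := by
      intro u p
      by_contra hodd
      rw [Nat.not_even_iff_odd] at hodd
      have hPu : ∀ k, P k u = 0 := by
        intro k
        have := walkP p k
        rw [Odd.neg_one_pow hodd] at this
        linarith
      -- p is nonempty, extract the first edge
      cases p with
      | nil => simp at hodd
      | cons h q =>
        rename_i w
        have hEuw : E u w = 0 := (edgeP h).2
        have hPuw : P u w = 0 := by
          have := (edgeP h).1 u
          have := hPu u
          linarith
        have hMuw : M u w = P u w + E u w := by rw [hME]; simp [Matrix.add_apply]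
        rw [hPuw, hEuw, hMapp] at hMuw
        simp [h] at hMuw
        linarith
    exact colorable_two_of_even_closed_walks G heven
  · intro hc
    obtain ⟨C⟩ := hc
    set s : Fin n → ℝ := fun i => if C i = 0 then 1 else -1 with hs
    have hs1 : ∀ i, s i = 1 ∨ s i = -1 := by
      intro i; by_cases h : C i = 0 <;> simp [hs, h]
    have hseq : ∀ i j, C i = C j → s i * s j = 1 := by
      intro i j hij
      by_cases h : C j = 0 <;> simp [hs, hij, h] <;> norm_num
    have hsne : ∀ i j, C i ≠ C j → s i * s j = -1 := by
      intro i j hij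
      have h2 : ∀ a : Fin 2, a ≠ 0 → a = 1 := by decide
      by_cases h : C i = 0 <;> by_cases h' : C j = 0
      · exact absurd (h.trans h'.symm) hij
      · simp [hs, h, h']
      · simp [hs, h, h']
      · exact absurd ((h2 _ h).trans (h2 _ h').symm) hij
    set P : Matrix (Fin n) (Fin n) ℝ := Matrix.of fun i j => s i * s j with hPdef
    have hPsd : P.PosSemidef := by
      have : P = (Matrix.of fun (_ : Fin 1) (j : Fin n) => s j)ᴴ *
          (Matrix.of fun (_ : Fin 1) (j : Fin n) => s j) := by
        ext i j
        simp [hPdef, Matrix.mul_apply, Matrix.conjTranspose_apply, Fin.sum_univ_one]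
      rw [this]
      exact posSemidef_conjTranspose_mul_self _
    refine ⟨P, M - P, by abel, hPsd, ?_, ?_⟩
    · show (M - P)ᵀ = M - P
      ext i j
      simp only [Matrix.transpose_apply, Matrix.sub_apply, hMapp, hPdef, Matrix.of_apply]
      by_cases h : G.Adj i j
      · simp [h, h.symm, mul_comm (s j) (s i)]
      · have h' : ¬ G.Adj j i := fun hh => h hh.symm
        simp [h, h', mul_comm (s j) (s i)]
    · intro i j
      simp only [Matrix.sub_apply, hMapp, hPdef, Matrix.of_apply]
      by_cases hij : C i = C j
      · have hna : ¬ G.Adj i j := fun ha => (C.valid ha) hij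
        rw [hseq i j hij]
        simp [hna]
      · rw [hsne i j hij]
        by_cases ha : G.Adj i j <;> simp [ha] <;> norm_num

end
end

section
/- Let n ≥ 5 be odd and let C_n be the cycle graph on n vertices (vertex set ℤ/nℤ, with i adjacent to j if and only if i − j ≡ ±1 mod n), with adjacency matrix A. Then for every t ∈ ℝ, the matrix J − t·A belongs to SPN_n if and only if t ≤ 1 + cos(π/n), where J is the n×n all-ones matrix. In particular σ(C_n) = 1 + cos(π/n). -/
open Matrix
open scoped ComplexOrder

noncomputable section

open Complex Finset

lemma zeta_zpow_eq_one_iff (n : ℕ) (hn : 0 < n) (d : ℤ) :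
    Complex.exp (2*Real.pi*I/n) ^ d = 1 ↔ (n:ℤ) ∣ d := by
  rw [← Complex.exp_int_mul, Complex.exp_eq_one_iff]
  constructor
  · rintro ⟨k, hk⟩
    refine ⟨k, ?_⟩
    have hn' : (n:ℂ) ≠ 0 := by exact_mod_cast hn.ne'
    have hI : (I:ℂ) ≠ 0 := I_ne_zero
    have hpi : (Real.pi:ℂ) ≠ 0 := by exact_mod_cast Real.pi_ne_zero
    field_simp at hk
    have : (d:ℂ) = n * k := by
      have h2 : (2:ℂ) ≠ 0 := two_ne_zero
      apply mul_left_cancel₀ (mul_ne_zero (mul_ne_zero h2 hpi) hI)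
      ring_nf
      ring_nf at hk
      linear_combination (2*(Real.pi:ℂ)*I) * hk
    exact_mod_cast this
  · rintro ⟨k, rfl⟩
    refine ⟨k, ?_⟩
    have hn' : (n:ℂ) ≠ 0 := by exact_mod_cast hn.ne'
    push_cast
    field_simp

lemma sum_zeta (n : ℕ) (hn : 0 < n) (d : ℤ) :
    ∑ k : Fin n, Complex.exp (2*Real.pi*I/n) ^ ((k:ℤ) * d) = if (n:ℤ) ∣ d then (n:ℂ) else 0 := by
  set ζ := Complex.exp (2*Real.pi*I/n) with hζ
  have hζ0 : ζ ≠ 0 := Complex.exp_ne_zero _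
  by_cases h : (n:ℤ) ∣ d
  · simp only [h, if_pos]
    have : ∀ k : Fin n, ζ ^ ((k:ℤ) * d) = 1 := by
      intro k
      rw [mul_comm, _root_.zpow_mul, (zeta_zpow_eq_one_iff n hn d).mpr h, _root_.one_zpow]
    simp [this]
  · simp only [h, if_neg, not_false_iff]
    have hne : ζ ^ d ≠ 1 := fun hc => h ((zeta_zpow_eq_one_iff n hn d).mp hc)
    have hgeom : ∑ k ∈ Finset.range n, (ζ ^ d) ^ k = ((ζ^d) ^ n - 1) / (ζ^d - 1) :=
      geom_sum_eq hne n
    have hnum : (ζ^d) ^ n = 1 := by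
      rw [← zpow_natCast (ζ^d) n, ← _root_.zpow_mul, mul_comm, _root_.zpow_mul]
      rw [(zeta_zpow_eq_one_iff n hn n).mpr dvd_rfl, _root_.one_zpow]
    calc ∑ k : Fin n, ζ ^ ((k:ℤ) * d) = ∑ k ∈ Finset.range n, (ζ ^ d) ^ k := by
          rw [← Fin.sum_univ_eq_sum_range (fun k => (ζ ^ d) ^ k) n]
          apply Finset.sum_congr rfl
          intro k _
          rw [← zpow_natCast (ζ^d) (k:ℕ), ← _root_.zpow_mul, mul_comm]
      _ = 0 := by rw [hgeom, hnum]; simp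

lemma val_add_one (n : ℕ) (hn : 2 ≤ n) (j : Fin n) [NeZero n] :
    (j + 1 : Fin n).val = (j.val + 1) % n := by
  have h1 : (1 : Fin n).val = 1 := by
    rw [Fin.val_one']; exact Nat.mod_eq_of_lt (by omega)
  rw [Fin.add_def, h1]

lemma dvd_sub_iff (n : ℕ) (hn : 2 ≤ n) (j l : Fin n) :
    (n:ℤ) ∣ ((j:ℤ) - (l:ℤ)) ↔ j = l := by
  have hj := j.isLt; have hl := l.isLt
  constructor
  · rintro ⟨c, hc⟩
    have hc0 : c = 0 := by
      rcases lt_trichotomy c 0 with h|h|h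
      · exfalso; nlinarith
      · exact h
      · exfalso; nlinarith
    rw [hc0, mul_zero, sub_eq_zero] at hc
    exact Fin.ext (by exact_mod_cast hc)
  · rintro rfl; simp

lemma dvd_succ_iff (n : ℕ) (hn : 2 ≤ n) [NeZero n] (j l : Fin n) :
    (n:ℤ) ∣ ((j:ℤ) - (l:ℤ) + 1) ↔ l = j + 1 := by
  have hj := j.isLt; have hl := l.isLt
  have hval := val_add_one n hn j
  constructor
  · rintro ⟨c, hc⟩
    have hc0 : c = 0 ∨ c = 1 := by
      rcases lt_trichotomy c 0 with h|h|h
      · exfalso; nlinarith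
      · left; exact h
      · rcases lt_or_ge c 2 with h2|h2
        · right; omega
        · exfalso; nlinarith
    apply Fin.ext
    rw [hval]
    rcases hc0 with rfl|rfl
    · rw [mul_zero] at hc
      rw [Nat.mod_eq_of_lt (by omega)]; omega
    · rw [mul_one] at hc
      have h1 : j.val + 1 = n := by omega
      rw [h1, Nat.mod_self]; omega
  · rintro rfl
    rcases (by omega : j.val + 1 < n ∨ j.val + 1 = n) with h|h
    · have hv : (j+1:Fin n).val = j.val + 1 := by rw [hval, Nat.mod_eq_of_lt h]
      refine ⟨0, ?_⟩
      have h2 : ((j+1:Fin n):ℤ) = (j.val:ℤ)+1 := by exact_mod_cast hv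
      rw [h2]; ring
    · have hv : (j+1:Fin n).val = 0 := by rw [hval, h, Nat.mod_self]
      refine ⟨1, ?_⟩
      have h2 : ((j+1:Fin n):ℤ) = 0 := by exact_mod_cast hv
      rw [h2]; push_cast; omega

lemma dvd_pred_iff (n : ℕ) (hn : 2 ≤ n) [NeZero n] (j l : Fin n) :
    (n:ℤ) ∣ ((j:ℤ) - (l:ℤ) - 1) ↔ j = l + 1 := by
  have h : (j:ℤ) - l - 1 = -((l:ℤ) - j + 1) := by ring
  rw [h, dvd_neg]
  exact dvd_succ_iff n hn l j

lemma cos_aux (n : ℕ) (hn : 5 ≤ n) {m : ℕ} (hm : 2*m + 1 ≤ n) :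
    Real.cos (Real.pi - Real.pi/n) ≤ Real.cos (2*Real.pi*m/n) := by
  have hn0 : (0:ℝ) < n := by positivity
  have hpi := Real.pi_pos
  have hm' : (2*m + 1 : ℝ) ≤ n := by exact_mod_cast hm
  apply Real.cos_le_cos_of_nonneg_of_le_pi
  · positivity
  · linarith [div_pos hpi hn0]
  · rw [div_le_iff₀ hn0, sub_mul, div_mul_cancel₀ _ hn0.ne']
    nlinarith

lemma cos_bound (n : ℕ) (hn : 5 ≤ n) (hodd : Odd n) (k : Fin n) :
    0 ≤ 2*Real.cos (Real.pi/n) + 2*Real.cos (2*Real.pi*k/n) := by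
  obtain ⟨m, hm⟩ := hodd
  have hk := k.isLt
  have hn0 : (0:ℝ) < n := by positivity
  have key : Real.cos (Real.pi - Real.pi/n) ≤ Real.cos (2*Real.pi*k/n) := by
    rcases (by omega : 2*k.val + 1 ≤ n ∨ 2*(n - k.val) + 1 ≤ n) with h|h
    · exact cos_aux n hn h
    · have hkn : k.val ≤ n := le_of_lt hk
      have hcast : ((n - k.val : ℕ) : ℝ) = (n:ℝ) - k.val := by
        push_cast [Nat.cast_sub hkn]; ring
      have h2 : Real.cos (2*Real.pi*(n - k.val : ℕ)/n) = Real.cos (2*Real.pi*k/n) := by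
        rw [hcast]
        have : 2*Real.pi*((n:ℝ) - k.val)/n = 2*Real.pi - 2*Real.pi*k/n := by
          field_simp
        rw [this, Real.cos_two_pi_sub]
      calc Real.cos (Real.pi - Real.pi/n) ≤ Real.cos (2*Real.pi*(n - k.val : ℕ)/n) :=
            cos_aux n hn h
        _ = _ := h2
  rw [Real.cos_pi_sub] at key
  linarith

lemma collapse {α : Type*} [NonAssocSemiring α] (n : ℕ) (g : Fin n → α) (b : Fin n) (v : α) :
    ∑ l : Fin n, g l * (if l = b then v else 0) = g b * v := by
  rw [Finset.sum_eq_single b]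
  · rw [if_pos rfl]
  · intro x _ hx; rw [if_neg hx, mul_zero]
  · intro h; exact absurd (Finset.mem_univ b) h

lemma key_ineq (n : ℕ) (hn : 5 ≤ n) (hodd : Odd n) [NeZero n] (y : Fin n → ℝ) :
    0 ≤ 2 * Real.cos (Real.pi / n) * (∑ i, y i ^ 2) + 2 * ∑ i : Fin n, y i * y (i + 1) := by
  have hn2 : 2 ≤ n := by omega
  have npos : 0 < n := by omega
  set ζ := Complex.exp (2*Real.pi*I/n) with hζdef
  have hζ0 : ζ ≠ 0 := Complex.exp_ne_zero _
  set c : ℝ := Real.cos (Real.pi / n) with hc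
  set F : Fin n → ℂ := fun k => ∑ j : Fin n, (y j : ℂ) * ζ ^ ((k:ℤ) * (j:ℤ)) with hF
  -- conjugate of zeta powers
  have hconj1 : (starRingEnd ℂ) ζ = ζ⁻¹ := by
    have hw : (starRingEnd ℂ) (2*(Real.pi:ℂ)*I/(n:ℂ)) = -(2*(Real.pi:ℂ)*I/(n:ℂ)) := by
      simp [map_div₀, Complex.conj_I, Complex.conj_ofNat]
      ring
    rw [hζdef]
    rw [← Complex.exp_conj, hw, Complex.exp_neg]
  have hconjζ : ∀ m : ℤ, (starRingEnd ℂ) (ζ ^ m) = ζ ^ (-m) := by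
    intro m
    rw [map_zpow₀, hconj1, _root_.inv_zpow, ← _root_.zpow_neg]
  have hconjF : ∀ k : Fin n, (starRingEnd ℂ) (F k) = ∑ l : Fin n, (y l : ℂ) * ζ ^ (-((k:ℤ) * (l:ℤ))) := by
    intro k
    rw [hF, map_sum]
    refine Finset.sum_congr rfl fun l _ => ?_
    rw [_root_.map_mul, Complex.conj_ofReal, hconjζ]
  have expand : ∀ k : Fin n,
      (2*(c:ℂ) + ζ^((k:ℤ)) + ζ^(-(k:ℤ))) * ((Complex.normSq (F k)) : ℂ)
        = ∑ j : Fin n, ∑ l : Fin n, ((y j : ℂ) * y l) *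
            (2*(c:ℂ) * ζ^((k:ℤ)*((j:ℤ)-(l:ℤ))) + ζ^((k:ℤ)*((j:ℤ)-(l:ℤ)+1)) + ζ^((k:ℤ)*((j:ℤ)-(l:ℤ)-1))) := by
    intro k
    rw [← Complex.mul_conj (F k), hconjF k, hF]
    rw [Finset.sum_mul_sum]
    rw [Finset.mul_sum]
    refine Finset.sum_congr rfl fun j _ => ?_
    rw [Finset.mul_sum]
    refine Finset.sum_congr rfl fun l _ => ?_
    have e0 : ζ^((k:ℤ)*(j:ℤ)) * ζ^(-((k:ℤ)*(l:ℤ))) = ζ^((k:ℤ)*((j:ℤ)-(l:ℤ))) := by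
      rw [← zpow_add₀ hζ0]; congr 1; ring
    have e1 : ζ^((k:ℤ)*((j:ℤ)-(l:ℤ)+1)) = ζ^((k:ℤ)*((j:ℤ)-(l:ℤ))) * ζ^((k:ℤ)) := by
      rw [← zpow_add₀ hζ0]; congr 1; ring
    have e2 : ζ^((k:ℤ)*((j:ℤ)-(l:ℤ)-1)) = ζ^((k:ℤ)*((j:ℤ)-(l:ℤ))) * ζ^(-(k:ℤ)) := by
      rw [← zpow_add₀ hζ0]; congr 1; ring
    rw [e1, e2, ← e0]; ring
  have inner : ∀ j l : Fin n,
      ∑ k : Fin n, ((y j:ℂ) * y l) *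
          (2*(c:ℂ) * ζ^((k:ℤ)*((j:ℤ)-(l:ℤ))) + ζ^((k:ℤ)*((j:ℤ)-(l:ℤ)+1)) + ζ^((k:ℤ)*((j:ℤ)-(l:ℤ)-1)))
        = ((y j:ℂ)*y l) * (2*(c:ℂ) * (if j = l then (n:ℂ) else 0)
            + (if l = j + 1 then (n:ℂ) else 0) + (if j = l + 1 then (n:ℂ) else 0)) := by
    intro j l
    rw [← Finset.mul_sum]
    congr 1
    rw [Finset.sum_add_distrib, Finset.sum_add_distrib, ← Finset.mul_sum]
    rw [sum_zeta n npos, sum_zeta n npos, sum_zeta n npos]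
    rw [if_congr (dvd_sub_iff n hn2 j l) rfl rfl, if_congr (dvd_succ_iff n hn2 j l) rfl rfl,
        if_congr (dvd_pred_iff n hn2 j l) rfl rfl]
  have inner2 : ∀ j : Fin n,
      ∑ l : Fin n, ((y j:ℂ)*y l) * (2*(c:ℂ) * (if j = l then (n:ℂ) else 0)
            + (if l = j + 1 then (n:ℂ) else 0) + (if j = l + 1 then (n:ℂ) else 0))
        = (y j:ℂ)*(y j)*(2*c)*n + (y j:ℂ)*y (j+1)*n + (y j:ℂ)*y (j-1)*n := by
    intro j
    have h1 : ∀ l, ((y j:ℂ)*y l) * (2*(c:ℂ) * (if j = l then (n:ℂ) else 0)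
            + (if l = j + 1 then (n:ℂ) else 0) + (if j = l + 1 then (n:ℂ) else 0))
        = ((y j:ℂ)*y l*(2*c)) * (if l = j then (n:ℂ) else 0)
          + ((y j:ℂ)*y l) * (if l = j+1 then (n:ℂ) else 0)
          + ((y j:ℂ)*y l) * (if l = j-1 then (n:ℂ) else 0) := by
      intro l
      have hc1 : (if j = l then (n:ℂ) else 0) = (if l = j then (n:ℂ) else 0) :=
        if_congr eq_comm rfl rfl
      have hc2 : (if j = l + 1 then (n:ℂ) else 0) = (if l = j - 1 then (n:ℂ) else 0) := by
        refine if_congr ?_ rfl rfl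
        constructor
        · rintro rfl; rw [add_sub_cancel_right]
        · rintro rfl; rw [sub_add_cancel]
      rw [hc1, hc2]; ring
    rw [Finset.sum_congr rfl (fun l _ => h1 l), Finset.sum_add_distrib, Finset.sum_add_distrib,
        collapse, collapse, collapse]
  have shift : ∑ j : Fin n, (y j:ℂ) * y (j-1) * n = ∑ j : Fin n, (y j:ℂ) * y (j+1) * n := by
    rw [← Fintype.sum_equiv (Equiv.addRight (1 : Fin n))
      (fun j => (y (j+1):ℂ) * y ((j+1)-1) * n) (fun j => (y j:ℂ) * y (j-1) * n) (fun j => rfl)]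
    refine Finset.sum_congr rfl fun j _ => ?_
    rw [add_sub_cancel_right]
    ring
  have main : ∑ k : Fin n, (2*(c:ℂ) + ζ^((k:ℤ)) + ζ^(-(k:ℤ))) * ((Complex.normSq (F k)) : ℂ)
      = (n:ℂ) * (((2 * c * (∑ i, y i ^ 2) + 2 * ∑ i : Fin n, y i * y (i + 1) : ℝ)) : ℂ) := by
    rw [Finset.sum_congr rfl (fun k _ => expand k)]
    rw [Finset.sum_comm]
    rw [Finset.sum_congr rfl (fun j (_ : j ∈ Finset.univ) => Finset.sum_comm)]
    rw [Finset.sum_congr rfl (fun j _ => Finset.sum_congr rfl (fun l _ => inner j l))]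
    rw [Finset.sum_congr rfl (fun j _ => inner2 j)]
    rw [Finset.sum_add_distrib, Finset.sum_add_distrib, shift]
    push_cast
    simp only [Finset.mul_sum, ← Finset.sum_add_distrib]
    refine Finset.sum_congr rfl fun j _ => ?_
    ring
  -- take real parts
  have hterm : ∀ k : Fin n, (2*(c:ℂ) + ζ^((k:ℤ)) + ζ^(-(k:ℤ))) * ((Complex.normSq (F k)) : ℂ)
      = (((2*c + 2*Real.cos (2*Real.pi*k/n)) * Complex.normSq (F k) : ℝ) : ℂ) := by
    intro k
    have h1 : ζ^((k:ℤ)) = Complex.exp (((2*Real.pi*k/n : ℝ) : ℂ) * I) := by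
      rw [hζdef, ← Complex.exp_int_mul]; congr 1; push_cast; ring
    have h2 : ζ^(-(k:ℤ)) = Complex.exp (-(((2*Real.pi*k/n : ℝ):ℂ)) * I) := by
      rw [hζdef, ← Complex.exp_int_mul]; congr 1; push_cast; ring
    have hz : (2*(c:ℂ) + ζ^((k:ℤ)) + ζ^(-(k:ℤ))) = (((2*c + 2*Real.cos (2*Real.pi*k/n)) : ℝ) : ℂ) := by
      rw [h1, h2, Complex.exp_mul_I, Complex.exp_mul_I, Complex.cos_neg, Complex.sin_neg,
        ← Complex.ofReal_cos]
      push_cast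
      ring
    rw [hz, ← Complex.ofReal_mul]
  have hsum : ∑ k : Fin n, ((2*c + 2*Real.cos (2*Real.pi*k/n)) * Complex.normSq (F k))
      = (n:ℝ) * (2 * c * (∑ i, y i ^ 2) + 2 * ∑ i : Fin n, y i * y (i + 1)) := by
    have := main
    rw [Finset.sum_congr rfl (fun k _ => hterm k)] at this
    rw [← Complex.ofReal_sum] at this
    have hn' : ((n:ℝ) : ℂ) = (n:ℂ) := by push_cast; rfl
    rw [← hn', ← Complex.ofReal_mul] at this
    exact_mod_cast this
  have hpos : 0 ≤ (n:ℝ) * (2 * c * (∑ i, y i ^ 2) + 2 * ∑ i : Fin n, y i * y (i + 1)) := by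
    rw [← hsum]
    apply Finset.sum_nonneg
    intro k _
    exact mul_nonneg (cos_bound n hn hodd k) (Complex.normSq_nonneg _)
  have hn' : (0:ℝ) < n := by positivity
  by_contra hcon
  push_neg at hcon
  nlinarith

lemma mod_succ (n a : ℕ) (h : a < n) :
    (a+1) % n = a+1 ∧ a+1 < n ∨ (a+1) % n = 0 ∧ a + 1 = n := by
  rcases Nat.lt_or_ge (a+1) n with h2|h2
  · exact Or.inl ⟨Nat.mod_eq_of_lt h2, h2⟩
  · have h3 : a+1 = n := by omega
    exact Or.inr ⟨by rw [h3, Nat.mod_self], h3⟩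

section Adj
variable (n : ℕ) (hn : 5 ≤ n) [NeZero n]
variable (A : Matrix (Fin n) (Fin n) ℝ)
variable (hA : ∀ i j : Fin n,
      A i j = if (i.val + 1) % n = j.val ∨ (j.val + 1) % n = i.val then 1 else 0)

lemma succ_cond_iff (hn : 5 ≤ n) (i j : Fin n) : (i.val + 1) % n = j.val ↔ j = i + 1 := by
  rw [Fin.ext_iff, val_add_one n (by omega) i]
  exact eq_comm

include hA

include hn in
lemma hAdiag (i : Fin n) : A i i = 0 := by
  rw [hA]
  have hi := i.isLt
  have h5 : 5 ≤ n := hn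
  rw [if_neg]
  rintro (h|h) <;>
    rcases mod_succ n i.val hi with ⟨h1,h2⟩|⟨h1,h2⟩ <;> rw [h1] at h <;> omega

include hn in
lemma hAsplit (i j : Fin n) :
    A i j = (if j = i + 1 then (1:ℝ) else 0) + (if i = j + 1 then 1 else 0) := by
  rw [hA]
  rw [if_congr (or_congr (succ_cond_iff n hn i j) (succ_cond_iff n hn j i)) rfl rfl]
  have hdisj : ¬(j = i + 1 ∧ i = j + 1) := by
    rintro ⟨w1, w2⟩
    have hi := i.isLt; have hj := j.isLt
    have v1 : j.val = (i.val + 1) % n := by rw [w1, val_add_one n (by omega) i]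
    have v2 : i.val = (j.val + 1) % n := by rw [w2, val_add_one n (by omega) j]
    rcases mod_succ n i.val hi with ⟨m1,m2⟩|⟨m1,m2⟩ <;>
      rcases mod_succ n j.val hj with ⟨m3,m4⟩|⟨m3,m4⟩ <;>
        rw [m1] at v1 <;> rw [m3] at v2 <;> omega
  by_cases h1 : j = i + 1 <;> by_cases h2 : i = j + 1
  · exact absurd ⟨h1, h2⟩ hdisj
  · rw [if_pos (Or.inl h1), if_pos h1, if_neg h2]; ring
  · rw [if_pos (Or.inr h2), if_neg h1, if_pos h2]; ring
  · rw [if_neg (by tauto), if_neg h1, if_neg h2]; ring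

include hn in
lemma hAsymm (i j : Fin n) : A i j = A j i := by
  rw [hA, hA, if_congr or_comm rfl rfl]

include hn in
lemma hQA (y : Fin n → ℝ) :
    ∑ i : Fin n, ∑ j : Fin n, y i * A i j * y j = 2 * ∑ i : Fin n, y i * y (i + 1) := by
  have h1 : ∀ i j : Fin n, y i * A i j * y j
      = (y i * y j) * (if j = i + 1 then (1:ℝ) else 0) + (y i * y j) * (if j = i - 1 then (1:ℝ) else 0) := by
    intro i j
    rw [hAsplit n hn A hA i j]
    have hc2 : (if i = j + 1 then (1:ℝ) else 0) = (if j = i - 1 then (1:ℝ) else 0) := by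
      refine if_congr ?_ rfl rfl
      constructor
      · rintro rfl; rw [add_sub_cancel_right]
      · rintro rfl; rw [sub_add_cancel]
    rw [hc2]; ring
  calc ∑ i : Fin n, ∑ j : Fin n, y i * A i j * y j
      = ∑ i : Fin n, ∑ j : Fin n, ((y i * y j) * (if j = i + 1 then (1:ℝ) else 0)
          + (y i * y j) * (if j = i - 1 then (1:ℝ) else 0)) :=
        Finset.sum_congr rfl fun i _ => Finset.sum_congr rfl fun j _ => h1 i j
    _ = ∑ i : Fin n, (y i * y (i+1) * 1 + y i * y (i-1) * 1) := by
        refine Finset.sum_congr rfl fun i _ => ?_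
        rw [Finset.sum_add_distrib, collapse, collapse]
    _ = ∑ i : Fin n, y i * y (i+1) + ∑ i : Fin n, y i * y (i-1) := by
        rw [← Finset.sum_add_distrib]
        refine Finset.sum_congr rfl fun i _ => by ring
    _ = 2 * ∑ i : Fin n, y i * y (i + 1) := by
        have shift : ∑ i : Fin n, y i * y (i-1) = ∑ i : Fin n, y i * y (i+1) := by
          rw [← Fintype.sum_equiv (Equiv.addRight (1 : Fin n))
            (fun i => y (i+1) * y ((i+1)-1)) (fun i => y i * y (i-1)) (fun i => rfl)]
          refine Finset.sum_congr rfl fun i _ => ?_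
          rw [add_sub_cancel_right]
          ring
        rw [shift]; ring

end Adj

lemma cos_div_nonneg (n : ℕ) (hn : 5 ≤ n) : 0 ≤ Real.cos (Real.pi / n) := by
  have hpi := Real.pi_pos
  have hn0 : (0:ℝ) < n := by positivity
  have h5 : (5:ℝ) ≤ n := by exact_mod_cast hn
  apply Real.cos_nonneg_of_mem_Icc
  constructor
  · have : 0 ≤ Real.pi / n := by positivity
    linarith
  · rw [div_le_div_iff₀ hn0 (by norm_num : (0:ℝ) < 2)]
    nlinarith

lemma upper (n : ℕ) (hn : 5 ≤ n) (hodd : Odd n) [NeZero n]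
    (A : Matrix (Fin n) (Fin n) ℝ)
    (hA : ∀ i j : Fin n,
      A i j = if (i.val + 1) % n = j.val ∨ (j.val + 1) % n = i.val then 1 else 0)
    (t : ℝ) (h : SPN ((Matrix.of fun _ _ => (1 : ℝ)) - t • A)) :
    t ≤ 1 + Real.cos (Real.pi / n) := by
  obtain ⟨P, E, hPE, hP, hEsym, hE0⟩ := h
  set c := Real.cos (Real.pi / n) with hc
  have hc0 : 0 ≤ c := cos_div_nonneg n hn
  set W : Fin n → Fin n → ℝ := fun i j => A i j + (if i = j then 2*c else 0) with hW
  have hAnn : ∀ i j, 0 ≤ A i j := by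
    intro i j; rw [hA]; split <;> norm_num
  have hA2 : ∀ i j, A i j * A i j = A i j := by
    intro i j; rw [hA]; split <;> norm_num
  have hWnn : ∀ i j, 0 ≤ W i j := by
    intro i j
    apply add_nonneg (hAnn i j)
    split
    · linarith
    · exact le_refl 0
  -- quadratic form identity for W
  have hWform : ∀ y : Fin n → ℝ, ∑ i : Fin n, ∑ j : Fin n, y i * W i j * y j
      = 2*c*(∑ i, y i^2) + 2*(∑ i : Fin n, y i * y (i+1)) := by
    intro y
    have h1 : ∀ i j : Fin n, y i * W i j * y j
        = y i * A i j * y j + (y i * y j) * (if j = i then 2*c else 0) := by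
      intro i j
      have : W i j = A i j + (if j = i then 2*c else 0) := by
        rw [hW]; dsimp only; rw [if_congr eq_comm rfl rfl]
      rw [this]; ring
    calc ∑ i : Fin n, ∑ j : Fin n, y i * W i j * y j
        = ∑ i : Fin n, (∑ j : Fin n, y i * A i j * y j + (y i * y i) * (2*c)) := by
          refine Finset.sum_congr rfl fun i _ => ?_
          rw [Finset.sum_congr rfl fun j _ => h1 i j, Finset.sum_add_distrib,
            collapse n (fun j => y i * y j) i (2*c)]
      _ = ∑ i : Fin n, ∑ j : Fin n, y i * A i j * y j + ∑ i : Fin n, (y i * y i) * (2*c) := by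
          rw [Finset.sum_add_distrib]
      _ = 2*c*(∑ i, y i^2) + 2*(∑ i : Fin n, y i * y (i+1)) := by
          rw [hQA n hn A hA y]
          rw [show ∑ i : Fin n, (y i * y i) * (2*c) = 2*c*(∑ i, y i^2) by
            rw [Finset.mul_sum]; exact Finset.sum_congr rfl fun i _ => by ring]
          ring
  have hPW : 0 ≤ ∑ i : Fin n, ∑ j : Fin n, P i j * W i j := by
    open scoped MatrixOrder in obtain ⟨B, hB⟩ := CStarAlgebra.nonneg_iff_eq_star_mul_self.mp hP.nonneg
    have hPentry : ∀ i j, P i j = ∑ r : Fin n, B r i * B r j := by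
      intro i j
      rw [hB, Matrix.star_eq_conjTranspose, Matrix.mul_apply]
      refine Finset.sum_congr rfl fun r _ => ?_
      rw [Matrix.conjTranspose_apply, star_trivial]
    calc ∑ i : Fin n, ∑ j : Fin n, P i j * W i j
        = ∑ i : Fin n, ∑ j : Fin n, ∑ r : Fin n, B r i * W i j * B r j := by
          refine Finset.sum_congr rfl fun i _ => Finset.sum_congr rfl fun j _ => ?_
          rw [hPentry, Finset.sum_mul]
          exact Finset.sum_congr rfl fun r _ => by ring
      _ = ∑ r : Fin n, ∑ i : Fin n, ∑ j : Fin n, B r i * W i j * B r j := by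
          rw [Finset.sum_congr rfl fun i (_ : i ∈ Finset.univ) => Finset.sum_comm]
          rw [Finset.sum_comm]
      _ ≥ 0 := by
          apply Finset.sum_nonneg
          intro r _
          rw [hWform (fun i => B r i)]
          exact key_ineq n hn hodd (fun i => B r i)
  have hEW : 0 ≤ ∑ i : Fin n, ∑ j : Fin n, E i j * W i j :=
    Finset.sum_nonneg fun i _ => Finset.sum_nonneg fun j _ => mul_nonneg (hE0 i j) (hWnn i j)
  -- the value of the pairing
  have hcard : ∑ i : Fin n, (1:ℝ) = n := by simp
  have hWsum : ∑ i : Fin n, ∑ j : Fin n, W i j = 2*c*n + 2*n := by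
    have := hWform (fun _ => 1)
    simp only [one_mul, mul_one, one_pow] at this
    rw [this, hcard]
  have hAW : ∑ i : Fin n, ∑ j : Fin n, A i j * W i j = 2*n := by
    have h1 : ∀ i j : Fin n, A i j * W i j = A i j + (A i j) * (if j = i then 2*c else 0) := by
      intro i j
      have : W i j = A i j + (if j = i then 2*c else 0) := by
        rw [hW]; dsimp only; rw [if_congr eq_comm rfl rfl]
      rw [this, mul_add, hA2]
    calc ∑ i : Fin n, ∑ j : Fin n, A i j * W i j
        = ∑ i : Fin n, (∑ j : Fin n, A i j + A i i * (2*c)) := by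
          refine Finset.sum_congr rfl fun i _ => ?_
          rw [Finset.sum_congr rfl fun j _ => h1 i j, Finset.sum_add_distrib,
            collapse n (fun j => A i j) i (2*c)]
      _ = ∑ i : Fin n, ∑ j : Fin n, A i j := by
          refine Finset.sum_congr rfl fun i _ => ?_
          rw [hAdiag n hn A hA i]; ring
      _ = ∑ i : Fin n, ∑ j : Fin n, (1:ℝ) * A i j * 1 := by
          refine Finset.sum_congr rfl fun i _ => Finset.sum_congr rfl fun j _ => by ring
      _ = 2*n := by rw [hQA n hn A hA (fun _ => 1)]; simp
  have hval : ∑ i : Fin n, ∑ j : Fin n, (((Matrix.of fun _ _ => (1 : ℝ)) - t • A : Matrix (Fin n) (Fin n) ℝ)) i j * W i j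
      = 2*c*n + 2*n - t*(2*n) := by
    have h1 : ∀ i j : Fin n, (((Matrix.of fun _ _ => (1 : ℝ)) - t • A : Matrix (Fin n) (Fin n) ℝ)) i j * W i j
        = W i j - t * (A i j * W i j) := by
      intro i j
      rw [Matrix.sub_apply, Matrix.smul_apply, Matrix.of_apply, smul_eq_mul]
      ring
    calc ∑ i : Fin n, ∑ j : Fin n, (((Matrix.of fun _ _ => (1 : ℝ)) - t • A : Matrix (Fin n) (Fin n) ℝ)) i j * W i j
        = ∑ i : Fin n, ∑ j : Fin n, (W i j - t * (A i j * W i j)) := by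
          exact Finset.sum_congr rfl fun i _ => Finset.sum_congr rfl fun j _ => h1 i j
      _ = (∑ i : Fin n, ∑ j : Fin n, W i j) - t * (∑ i : Fin n, ∑ j : Fin n, A i j * W i j) := by
          rw [Finset.mul_sum, ← Finset.sum_sub_distrib]
          refine Finset.sum_congr rfl fun i _ => ?_
          rw [Finset.mul_sum, ← Finset.sum_sub_distrib]
      _ = 2*c*n + 2*n - t*(2*n) := by rw [hWsum, hAW]
  have hsplit : ∑ i : Fin n, ∑ j : Fin n, (((Matrix.of fun _ _ => (1 : ℝ)) - t • A : Matrix (Fin n) (Fin n) ℝ)) i j * W i j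
      = (∑ i : Fin n, ∑ j : Fin n, P i j * W i j) + ∑ i : Fin n, ∑ j : Fin n, E i j * W i j := by
    rw [hPE]
    rw [← Finset.sum_add_distrib]
    refine Finset.sum_congr rfl fun i _ => ?_
    rw [← Finset.sum_add_distrib]
    refine Finset.sum_congr rfl fun j _ => ?_
    rw [Matrix.add_apply]; ring
  have hfinal : 0 ≤ 2*c*n + 2*n - t*(2*n) := by
    rw [← hval, hsplit]
    exact add_nonneg hPW hEW
  have hn0 : (5:ℝ) ≤ n := by exact_mod_cast hn
  nlinarith

lemma cos_pi_add' (x : ℝ) : Real.cos (Real.pi + x) = -Real.cos x := by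
  have : Real.pi + x = Real.pi - (-x) := by ring
  rw [this, Real.cos_pi_sub, Real.cos_neg]

lemma lower (n : ℕ) (hn : 5 ≤ n) (hodd : Odd n) [NeZero n]
    (A : Matrix (Fin n) (Fin n) ℝ)
    (hA : ∀ i j : Fin n,
      A i j = if (i.val + 1) % n = j.val ∨ (j.val + 1) % n = i.val then 1 else 0)
    (t : ℝ) (ht : t ≤ 1 + Real.cos (Real.pi / n)) :
    SPN ((Matrix.of fun _ _ => (1 : ℝ)) - t • A) := by
  have hn0 : (0:ℝ) < n := by positivity
  set θ := Real.pi - Real.pi / n with hθ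
  set P : Matrix (Fin n) (Fin n) ℝ :=
    Matrix.of (fun i j => Real.cos (((i.val:ℝ) - (j.val:ℝ)) * θ)) with hPdef
  have hPsymm : ∀ i j, P i j = P j i := by
    intro i j
    simp only [hPdef, Matrix.of_apply]
    rw [← Real.cos_neg (((j.val:ℝ) - (i.val:ℝ)) * θ)]
    congr 1; ring
  have hPdiag : ∀ i, P i i = 1 := by
    intro i
    simp only [hPdef, Matrix.of_apply, sub_self, zero_mul, Real.cos_zero]
  have hedge : ∀ i j : Fin n, ((i.val + 1) % n = j.val) → P i j = -Real.cos (Real.pi/n) := by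
    intro i j hij
    rcases mod_succ n i.val i.isLt with ⟨m1, m2⟩|⟨m1, m2⟩
    · have hj : j.val = i.val + 1 := by omega
      have harg : ((i.val:ℝ) - (j.val:ℝ)) * θ = -θ := by
        rw [hj]; push_cast; ring
      simp only [hPdef, Matrix.of_apply]
      rw [harg, Real.cos_neg, hθ, Real.cos_pi_sub]
    · obtain ⟨m, hm⟩ := hodd
      have hm2 : 2 ≤ m := by omega
      have hj : j.val = 0 := by omega
      have hi : i.val = n - 1 := by omega
      have hival : (i.val:ℝ) = (n:ℝ) - 1 := by
        rw [hi]; push_cast [Nat.cast_sub (by omega : 1 ≤ n)]; ring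
      have hncast : (n:ℝ) = 2*(m:ℝ)+1 := by exact_mod_cast congrArg (Nat.cast : ℕ → ℝ) hm
      have harg : ((i.val:ℝ) - (j.val:ℝ)) * θ
          = (Real.pi + Real.pi/n) + ((m:ℤ)-1 : ℤ) * (2*Real.pi) := by
        rw [hival, hj, hθ, hncast]
        have hden : 2*(m:ℝ)+1 ≠ 0 := by positivity
        push_cast
        field_simp
        ring
      simp only [hPdef, Matrix.of_apply]
      rw [harg, Real.cos_add_int_mul_two_pi, cos_pi_add']
  have hPbound : ∀ i j, P i j ≤ 1 := by
    intro i j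
    simp only [hPdef, Matrix.of_apply]
    exact Real.cos_le_one _
  have hPpsd : P.PosSemidef := by
    refine Matrix.posSemidef_iff_dotProduct_mulVec.mpr ⟨?_, ?_⟩
    · show Pᴴ = P
      ext i j
      rw [Matrix.conjTranspose_apply, star_trivial]
      exact hPsymm j i
    · intro x
      have hquad : dotProduct (star x) (P *ᵥ x)
          = ∑ i : Fin n, ∑ j : Fin n, x i * P i j * x j := by
        rw [dotProduct]
        refine Finset.sum_congr rfl fun i _ => ?_
        rw [star_trivial, Matrix.mulVec, dotProduct, Finset.mul_sum]
        refine Finset.sum_congr rfl fun j _ => by ring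
      rw [hquad]
      have hsplit : ∀ i j : Fin n, x i * P i j * x j
          = (x i * Real.cos (i.val * θ)) * (x j * Real.cos (j.val * θ))
            + (x i * Real.sin (i.val * θ)) * (x j * Real.sin (j.val * θ)) := by
        intro i j
        simp only [hPdef, Matrix.of_apply]
        rw [sub_mul, Real.cos_sub]
        ring
      calc ∑ i : Fin n, ∑ j : Fin n, x i * P i j * x j
          = (∑ i : Fin n, x i * Real.cos (i.val * θ))^2
            + (∑ i : Fin n, x i * Real.sin (i.val * θ))^2 := by
            rw [pow_two, pow_two, Finset.sum_mul_sum, Finset.sum_mul_sum,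
              ← Finset.sum_add_distrib]
            refine Finset.sum_congr rfl fun i _ => ?_
            rw [← Finset.sum_add_distrib]
            exact Finset.sum_congr rfl fun j _ => hsplit i j
        _ ≥ 0 := by positivity
  set E : Matrix (Fin n) (Fin n) ℝ :=
    Matrix.of (fun i j => 1 - t * A i j - P i j) with hEdef
  refine ⟨P, E, ?_, hPpsd, ?_, ?_⟩
  · ext i j
    simp only [Matrix.sub_apply, Matrix.add_apply, Matrix.smul_apply, Matrix.of_apply,
      hEdef, smul_eq_mul]
    ring
  · show Eᵀ = E
    ext i j
    rw [Matrix.transpose_apply]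
    simp only [hEdef, Matrix.of_apply]
    rw [hPsymm j i, hAsymm n hn A hA j i]
  · intro i j
    simp only [hEdef, Matrix.of_apply]
    by_cases hij : i = j
    · subst hij
      rw [hAdiag n hn A hA i, hPdiag i]
      ring_nf
      exact le_refl 0
    · by_cases hedge2 : (i.val + 1) % n = j.val ∨ (j.val + 1) % n = i.val
      · have hA1 : A i j = 1 := by rw [hA, if_pos hedge2]
        have hPval : P i j = -Real.cos (Real.pi/n) := by
          rcases hedge2 with h|h
          · exact hedge i j h
          · rw [hPsymm i j]; exact hedge j i h
        rw [hA1, hPval]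
        linarith
      · have hA0 : A i j = 0 := by rw [hA, if_neg hedge2]
        rw [hA0]
        have := hPbound i j
        linarith


theorem stmt14 (n : ℕ) (hn : 5 ≤ n) (hodd : Odd n)
    (A : Matrix (Fin n) (Fin n) ℝ)
    (hA : ∀ i j : Fin n,
      A i j = if (i.val + 1) % n = j.val ∨ (j.val + 1) % n = i.val then 1 else 0) :
    (∀ t : ℝ,
        SPN ((Matrix.of fun _ _ => (1 : ℝ)) - t • A) ↔ t ≤ 1 + Real.cos (Real.pi / n))
      ∧ sSup {t : ℝ | SPN ((Matrix.of fun _ _ => (1 : ℝ)) - t • A)}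
          = 1 + Real.cos (Real.pi / n) := by
  haveI : NeZero n := ⟨by omega⟩
  have hiff : ∀ t : ℝ,
      SPN ((Matrix.of fun _ _ => (1 : ℝ)) - t • A) ↔ t ≤ 1 + Real.cos (Real.pi / n) :=
    fun t => ⟨upper n hn hodd A hA t, lower n hn hodd A hA t⟩
  refine ⟨hiff, ?_⟩
  have hset : {t : ℝ | SPN ((Matrix.of fun _ _ => (1 : ℝ)) - t • A)}
      = Set.Iic (1 + Real.cos (Real.pi / n)) := by
    ext t; exact hiff t
  rw [hset, csSup_Iic]

end
end

section
/- Let G be a connected, finite simple strongly regular graph with parameters (n, k, ℓ, μ), where k ≥ 1 (G has at least one edge) and G has at least one pair of distinct nonadjacent vertices. Assume G is rank 3, meaning: for all vertices u ≠ v and u' ≠ v' such that (u adjacent to v if and only if u' adjacent to v'), there exists a graph automorphism φ of G with φ(u) = u' and φ(v) = v'. Let r = (ℓ − μ + √((ℓ − μ)² + 4(k − μ)))/2 ∈ ℝ. Then σ(G) := sSup {t ∈ ℝ : J − t·A_G ∈ SPN_n} = n(r+1)/(r(n−1)+k), where A_G is the adjacency matrix of G and J the n×n all-ones matrix. -/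
open Matrix
open scoped ComplexOrder

set_option maxHeartbeats 4000000

noncomputable section

section Aux

variable {m : Type*} [Fintype m] [DecidableEq m]

lemma psd_smul' {c : ℝ} (hc : 0 ≤ c) {M : Matrix m m ℝ} (hM : M.PosSemidef) :
    (c • M).PosSemidef := by
  refine .of_dotProduct_mulVec_nonneg ?_ ?_
  · unfold Matrix.IsHermitian
    rw [conjTranspose_smul, hM.1]; simp
  · intro x
    rw [smul_mulVec, dotProduct_smul]
    exact mul_nonneg hc (hM.dotProduct_mulVec_nonneg x)

lemma psd_sum' {ι : Type*} [Fintype ι] (f : ι → Matrix m m ℝ)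
    (hf : ∀ i, (f i).PosSemidef) : (∑ i, f i).PosSemidef :=
  Finset.sum_induction f _ (fun _ _ ha hb => ha.add hb) Matrix.PosSemidef.zero
    (fun i _ => hf i)

lemma psd_trace_nonneg' {M : Matrix m m ℝ} (hM : M.PosSemidef) : 0 ≤ M.trace := by
  refine Finset.sum_nonneg fun i _ => ?_
  have := hM.dotProduct_mulVec_nonneg (Pi.single i 1)
  simpa [dotProduct, Matrix.mulVec, Pi.single_apply, Finset.sum_ite_eq, mul_ite] using this

lemma conjT_eq_of_symm {M : Matrix m m ℝ} (hsym : Mᵀ = M) : Mᴴ = M := by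
  ext i j
  simp only [Matrix.conjTranspose_apply, RCLike.star_def, starRingEnd_apply, star_trivial]
  exact (congrFun (congrFun hsym j) i).symm

lemma psd_symm_scaled_idem {M : Matrix m m ℝ} {c : ℝ} (hc : 0 < c) (hsym : Mᵀ = M)
    (hid : M * M = c • M) : M.PosSemidef := by
  have h := psd_smul' (inv_nonneg.mpr hc.le) (Matrix.posSemidef_conjTranspose_mul_self M)
  rw [conjT_eq_of_symm hsym, hid, smul_smul, inv_mul_cancel₀ hc.ne', one_smul] at h
  exact h

end Aux

theorem stmt15 {n : ℕ} (G : SimpleGraph (Fin n)) [DecidableRel G.Adj]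
    (k ℓ μ : ℕ) (hsrg : G.IsSRGWith n k ℓ μ)
    (hconn : G.Connected) (hk : 1 ≤ k)
    (hnonadj : ∃ u v : Fin n, u ≠ v ∧ ¬ G.Adj u v)
    (hrank3 : ∀ u v u' v' : Fin n, u ≠ v → u' ≠ v' → (G.Adj u v ↔ G.Adj u' v') →
        ∃ φ : G ≃g G, φ u = u' ∧ φ v = v')
    (r : ℝ) (hr : r = ((ℓ : ℝ) - μ + Real.sqrt (((ℓ : ℝ) - μ) ^ 2 + 4 * ((k : ℝ) - μ))) / 2) :
    sSup {t : ℝ | SPN ((Matrix.of fun _ _ => (1 : ℝ)) - t • G.adjMatrix ℝ)}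
      = n * (r + 1) / (r * ((n : ℝ) - 1) + k) := by
  classical
  obtain ⟨u₀, v₀, huv0, hnadj0⟩ := hnonadj
  -- basic combinatorial facts
  have hn1 : 1 < n := by
    by_contra h
    push_neg at h
    have h1 := u₀.isLt
    have h2 := v₀.isLt
    exact huv0 (Fin.ext (by omega))
  -- an edge
  have hdeg : ∀ v : Fin n, (G.neighborFinset v).card = k := fun v => hsrg.regular v
  have hne : ∀ v : Fin n, (G.neighborFinset v).Nonempty := by
    intro v
    rw [← Finset.card_pos, hdeg v]; omega
  obtain ⟨w₀, hw₀⟩ := hne u₀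
  have hadj₀ : G.Adj u₀ w₀ := by rwa [SimpleGraph.mem_neighborFinset] at hw₀
  -- k + 2 ≤ n
  have hkn : k + 2 ≤ n := by
    have hsub : G.neighborFinset u₀ ⊆ (Finset.univ.erase v₀).erase u₀ := by
      intro w hw
      rw [SimpleGraph.mem_neighborFinset] at hw
      refine Finset.mem_erase.mpr ⟨(G.ne_of_adj hw).symm, Finset.mem_erase.mpr ⟨?_, Finset.mem_univ w⟩⟩
      rintro rfl
      exact hnadj0 hw
    have hcard := Finset.card_le_card hsub
    rw [hdeg u₀, Finset.card_erase_of_mem (Finset.mem_erase.mpr ⟨huv0, Finset.mem_univ u₀⟩),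
      Finset.card_erase_of_mem (Finset.mem_univ v₀), Finset.card_univ, Fintype.card_fin] at hcard
    omega
  -- ℓ < k
  have hlk : ℓ < k := by
    have hcard := hsrg.of_adj u₀ w₀ hadj₀
    have hsub : (G.commonNeighbors u₀ w₀).toFinset ⊆ (G.neighborFinset u₀).erase w₀ := by
      intro w hw
      rw [Set.mem_toFinset] at hw
      refine Finset.mem_erase.mpr ⟨?_, ?_⟩
      · rintro rfl
        exact (G.loopless.irrefl w) hw.2
      · rw [SimpleGraph.mem_neighborFinset]; exact hw.1
    have h1 := Finset.card_le_card hsub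
    rw [Set.toFinset_card, hcard, Finset.card_erase_of_mem (by rwa [SimpleGraph.mem_neighborFinset]),
      hdeg u₀] at h1
    omega
  -- μ ≤ k
  have hmk : μ ≤ k := by
    have hcard := hsrg.of_not_adj huv0 hnadj0
    have hsub : (G.commonNeighbors u₀ v₀).toFinset ⊆ G.neighborFinset u₀ := by
      intro w hw
      rw [Set.mem_toFinset] at hw
      rw [SimpleGraph.mem_neighborFinset]; exact hw.1
    have h1 := Finset.card_le_card hsub
    rw [Set.toFinset_card, hcard, hdeg u₀] at h1
    omega
  -- real scalar abbreviations
  set K : ℝ := (k : ℝ) with hKdef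
  set L : ℝ := (ℓ : ℝ) with hLdef
  set Mu : ℝ := (μ : ℝ) with hMudef
  set Nn : ℝ := (n : ℝ) with hNndef
  have hKM : Mu ≤ K := by rw [hKdef, hMudef]; exact_mod_cast hmk
  have hLK : L + 1 ≤ K := by rw [hKdef, hLdef]; exact_mod_cast hlk
  have hKN : K + 2 ≤ Nn := by rw [hKdef, hNndef]; exact_mod_cast hkn
  have hK1 : 1 ≤ K := by rw [hKdef]; exact_mod_cast hk
  have hL0 : 0 ≤ L := by rw [hLdef]; positivity
  have hMu0 : 0 ≤ Mu := by rw [hMudef]; positivity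
  have hNn0 : (0:ℝ) < Nn := by linarith
  have hD : 0 ≤ (L - Mu) ^ 2 + 4 * (K - Mu) := by linarith [sq_nonneg (L - Mu)]
  set rt : ℝ := Real.sqrt ((L - Mu) ^ 2 + 4 * (K - Mu)) with hrtdef
  have hrt0 : 0 ≤ rt := Real.sqrt_nonneg _
  have hrt2 : rt ^ 2 = (L - Mu) ^ 2 + 4 * (K - Mu) := Real.sq_sqrt hD
  have hrdef : r = ((L - Mu) + rt) / 2 := hr
  set s : ℝ := L - Mu - r with hsdef
  have hsalt : s = ((L - Mu) - rt) / 2 := by rw [hsdef, hrdef]; ring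
  have hrs : r - s = rt := by rw [hsalt, hrdef]; ring
  have R2 : r * s = Mu - K := by
    rw [hrdef, hsalt]; linear_combination (-1/4 : ℝ) * hrt2
  have hr0 : 0 ≤ r := by
    rcases le_or_gt 0 (L - Mu) with h | h
    · rw [hrdef]; linarith [hrt0]
    · have h1 : Mu - L ≤ rt := by
        rw [hrtdef]
        calc Mu - L = Real.sqrt ((Mu - L) ^ 2) := (Real.sqrt_sq (by linarith)).symm
          _ ≤ Real.sqrt ((L - Mu) ^ 2 + 4 * (K - Mu)) := by
              apply Real.sqrt_le_sqrt
              have h2 : (Mu - L) ^ 2 = (L - Mu) ^ 2 := by ring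
              linarith
      rw [hrdef]; linarith
  have hs1 : s ≤ -1 := by
    have h1 : L - Mu + 2 ≤ rt := by
      rcases le_or_gt (L - Mu + 2) 0 with h | h
      · linarith [hrt0]
      · rw [hrtdef]
        calc L - Mu + 2 = Real.sqrt ((L - Mu + 2) ^ 2) := (Real.sqrt_sq (by linarith)).symm
          _ ≤ Real.sqrt ((L - Mu) ^ 2 + 4 * (K - Mu)) := by
              apply Real.sqrt_le_sqrt
              have h2 : (L - Mu + 2) ^ 2 = (L - Mu) ^ 2 + 4 * (L - Mu) + 4 := by ring
              linarith
    rw [hsalt]; linarith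
  have hrspos : 0 < r - s := by linarith
  -- the key SRG parameter identity
  have R3 : Nn * Mu = (K - r) * (K - s) := by
    have hpe := SimpleGraph.IsSRGWith.param_eq G hsrg (by omega)
    obtain ⟨a, ha⟩ : ∃ a, k = ℓ + 1 + a := ⟨k - ℓ - 1, by omega⟩
    obtain ⟨c, hc⟩ : ∃ c, n = k + 1 + c := ⟨n - k - 1, by omega⟩
    have hpe2 : k * a = c * μ := by
      have h1 : k - ℓ - 1 = a := by omega
      have h2 : n - k - 1 = c := by omega
      rw [h1, h2] at hpe
      exact hpe
    have hpeR : K * (a : ℝ) = (c : ℝ) * Mu := by rw [hKdef, hMudef]; exact_mod_cast hpe2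
    have hKa : K = L + 1 + (a : ℝ) := by rw [hKdef, hLdef]; exact_mod_cast ha
    have hNc : Nn = K + 1 + (c : ℝ) := by rw [hKdef, hNndef]; exact_mod_cast hc
    have hs' : s = L - Mu - r := hsdef
    linear_combination Mu * hNc - hpeR - K * hKa + K * hs' - R2
  -- matrices
  set A : Matrix (Fin n) (Fin n) ℝ := G.adjMatrix ℝ with hAdef
  set Jm : Matrix (Fin n) (Fin n) ℝ := Matrix.of (fun _ _ => (1:ℝ)) with hJmdef
  have hJsym : Jmᵀ = Jm := rfl
  have hAsym : Aᵀ = A := by rw [hAdef]; exact SimpleGraph.transpose_adjMatrix G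
  have hCm : Gᶜ.adjMatrix ℝ = Jm - 1 - A := by
    ext i j
    simp only [hJmdef, hAdef, Matrix.sub_apply, Matrix.of_apply, Matrix.one_apply,
      SimpleGraph.adjMatrix_apply, SimpleGraph.compl_adj]
    by_cases hij : i = j
    · subst hij
      simp [G.loopless.irrefl i]
    · by_cases hadj : G.Adj i j
      · simp [hij, hadj]
      · simp [hij, hadj]
  have hA2 : A * A = (K - Mu) • (1 : Matrix (Fin n) (Fin n) ℝ) + (L - Mu) • A + Mu • Jm := by
    have h := SimpleGraph.IsSRGWith.matrix_eq (α := ℝ) hsrg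
    rw [pow_two, hCm] at h
    rw [hAdef, h]
    simp only [← Nat.cast_smul_eq_nsmul ℝ]
    rw [hKdef, hLdef, hMudef]
    module
  have hAJ : A * Jm = K • Jm := by
    ext i j
    rw [hAdef, hJmdef]
    simp only [SimpleGraph.adjMatrix_mul_apply, Matrix.smul_apply, Matrix.of_apply,
      smul_eq_mul, mul_one]
    rw [Finset.sum_const, hdeg i, hKdef]
    simp
  have hJA : Jm * A = K • Jm := by
    ext i j
    rw [hAdef, hJmdef]
    simp only [SimpleGraph.mul_adjMatrix_apply, Matrix.smul_apply, Matrix.of_apply,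
      smul_eq_mul, mul_one]
    rw [Finset.sum_const, hdeg j, hKdef]
    simp
  have hJJ : Jm * Jm = Nn • Jm := by
    ext i j
    rw [hJmdef, hNndef]
    simp [Matrix.mul_apply]
  have htr1 : (1 : Matrix (Fin n) (Fin n) ℝ).trace = Nn := by
    rw [hNndef]; simp
  have htrA : A.trace = 0 := by rw [hAdef]; simp
  have htrJ : Jm.trace = Nn := by
    rw [hJmdef, hNndef]; simp [Matrix.trace, Matrix.diag]
  -- the scaled idempotents
  set F1 : Matrix (Fin n) (Fin n) ℝ :=
    (-s * Nn) • (1 : Matrix (Fin n) (Fin n) ℝ) + Nn • A + (-(K - s)) • Jm with hF1def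
  set F2 : Matrix (Fin n) (Fin n) ℝ :=
    (r * Nn) • (1 : Matrix (Fin n) (Fin n) ℝ) + (-Nn) • A + (K - r) • Jm with hF2def
  have hF1sym : F1ᵀ = F1 := by
    rw [hF1def]
    simp [Matrix.transpose_add, Matrix.transpose_smul, hAsym, hJsym]
  have hF2sym : F2ᵀ = F2 := by
    rw [hF2def]
    simp [Matrix.transpose_add, Matrix.transpose_smul, hAsym, hJsym]
  have hF1idem : F1 * F1 = (Nn * (r - s)) • F1 := by
    rw [hF1def]
    simp only [Matrix.add_mul, Matrix.mul_add, Matrix.smul_mul, Matrix.mul_smul,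
      Matrix.one_mul, Matrix.mul_one, hA2, hAJ, hJA, hJJ, smul_add, smul_smul]
    match_scalars <;>
      first
        | ring1
        | linear_combination (Nn^2) * R2
        | linear_combination Nn * R2
        | linear_combination R2
        | linear_combination (Nn^2) * R3
        | linear_combination Nn * R3
        | linear_combination R3
        | linear_combination (-Nn^2 : ℝ) * hsdef
  have hF2idem : F2 * F2 = (Nn * (r - s)) • F2 := by
    rw [hF2def]
    simp only [Matrix.add_mul, Matrix.mul_add, Matrix.smul_mul, Matrix.mul_smul,
      Matrix.one_mul, Matrix.mul_one, hA2, hAJ, hJA, hJJ, smul_add, smul_smul]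
    match_scalars <;>
      first
        | ring1
        | linear_combination (Nn^2) * R2
        | linear_combination Nn * R2
        | linear_combination R2
        | linear_combination (Nn^2) * R3
        | linear_combination Nn * R3
        | linear_combination R3
        | linear_combination (-Nn^2 : ℝ) * hsdef
  have hAF1 : A * F1 = r • F1 := by
    rw [hF1def]
    simp only [Matrix.add_mul, Matrix.mul_add, Matrix.smul_mul, Matrix.mul_smul,
      Matrix.one_mul, Matrix.mul_one, hA2, hAJ, hJA, hJJ, smul_add, smul_smul]
    match_scalars <;>
      first
        | ring1
        | linear_combination (Nn^2) * R2
        | linear_combination Nn * R2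
        | linear_combination R2
        | linear_combination (Nn^2) * R3
        | linear_combination Nn * R3
        | linear_combination R3
        | linear_combination (-Nn^2 : ℝ) * hsdef
  have hJF1 : Jm * F1 = 0 := by
    rw [hF1def]
    simp only [Matrix.add_mul, Matrix.mul_add, Matrix.smul_mul, Matrix.mul_smul,
      Matrix.one_mul, Matrix.mul_one, hA2, hAJ, hJA, hJJ, smul_add, smul_smul]
    match_scalars <;> ring1
  have htrF1 : F1.trace = Nn * (-s * (Nn - 1) - K) := by
    rw [hF1def]
    simp only [Matrix.trace_add, Matrix.trace_smul, htr1, htrA, htrJ, smul_eq_mul]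
    ring
  have hF1psd : F1.PosSemidef := psd_symm_scaled_idem (mul_pos hNn0 hrspos) hF1sym hF1idem
  have hF2psd : F2.PosSemidef := psd_symm_scaled_idem (mul_pos hNn0 hrspos) hF2sym hF2idem
  have hq0 : (0:ℝ) < r * (Nn - 1) + K := by
    have h1 : 0 ≤ r * (Nn - 1) := mul_nonneg hr0 (by linarith)
    linarith
  clear_value F1 F2 A Jm K L Mu Nn rt s
  -- upper bound
  letI : Fintype (G ≃g G) := Fintype.ofInjective (fun φ : G ≃g G => φ.toEquiv)
    (fun a b h => by cases a; cases b; congr)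
  have hcard0 : 0 < ((Fintype.card (G ≃g G) : ℕ) : ℝ) := by
    have : Nonempty (G ≃g G) := ⟨(SimpleGraph.Iso.refl : G ≃g G)⟩
    exact_mod_cast Fintype.card_pos
  have hub : ∀ t : ℝ, SPN (Jm - t • A) → t * (r * (Nn - 1) + K) ≤ Nn * (r + 1) := by
    rintro t ⟨P, E, hPE, hPpsd, hEsymm, hEnn⟩
    obtain ⟨Nc, hNcdef⟩ : ∃ x : ℝ, x = ((Fintype.card (G ≃g G) : ℕ) : ℝ) := ⟨_, rfl⟩
    have hNc0 : 0 < Nc := by rw [hNcdef]; exact hcard0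
    obtain ⟨Eb, hEbdef⟩ : ∃ X : Matrix (Fin n) (Fin n) ℝ,
      X = Nc⁻¹ • ∑ φ : G ≃g G, E.submatrix (⇑φ) (⇑φ) := ⟨_, rfl⟩
    obtain ⟨Pb, hPbdef⟩ : ∃ X : Matrix (Fin n) (Fin n) ℝ,
      X = Nc⁻¹ • ∑ φ : G ≃g G, P.submatrix (⇑φ) (⇑φ) := ⟨_, rfl⟩
    have hGinv : ∀ (φ : G ≃g G), (Jm - t • A).submatrix (⇑φ) (⇑φ) = Jm - t • A := by
      intro φ
      ext i j
      simp only [Matrix.submatrix_apply, Matrix.sub_apply, Matrix.smul_apply, hJmdef,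
        Matrix.of_apply, hAdef, SimpleGraph.adjMatrix_apply, smul_eq_mul]
      by_cases hadj : G.Adj i j
      · simp [hadj, φ.map_adj_iff.mpr hadj]
      · have : ¬ G.Adj (φ i) (φ j) := fun h => hadj (φ.map_adj_iff.mp h)
        simp [hadj, this]
    have hsum : Pb + Eb = Jm - t • A := by
      rw [hPbdef, hEbdef, ← smul_add, ← Finset.sum_add_distrib]
      have heach : ∀ φ : G ≃g G, P.submatrix (⇑φ) (⇑φ) + E.submatrix (⇑φ) (⇑φ) = Jm - t • A := by
        intro φ
        rw [show P.submatrix (⇑φ) (⇑φ) + E.submatrix (⇑φ) (⇑φ)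
            = (P + E).submatrix (⇑φ) (⇑φ) from rfl, ← hPE, hGinv φ]
      rw [Finset.sum_congr rfl (fun φ _ => heach φ), Finset.sum_const, Finset.card_univ,
        ← Nat.cast_smul_eq_nsmul ℝ, smul_smul, ← hNcdef, inv_mul_cancel₀ hNc0.ne', one_smul]
    have hPbpsd : Pb.PosSemidef := by
      rw [hPbdef]
      exact psd_smul' (inv_nonneg.mpr hNc0.le) (psd_sum' _ (fun φ => hPpsd.submatrix (⇑φ)))
    have hEbnn : ∀ i j, 0 ≤ Eb i j := by
      intro i j
      rw [hEbdef]
      simp only [Matrix.smul_apply, Matrix.sum_apply, smul_eq_mul]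
      exact mul_nonneg (inv_nonneg.mpr hNc0.le)
        (Finset.sum_nonneg fun φ _ => hEnn _ _)
    have hEbinv : ∀ (ψ : G ≃g G) (i j : Fin n), Eb (ψ i) (ψ j) = Eb i j := by
      intro ψ i j
      rw [hEbdef]
      simp only [Matrix.smul_apply, Matrix.sum_apply, Matrix.submatrix_apply, smul_eq_mul]
      congr 1
      let e : (G ≃g G) ≃ (G ≃g G) :=
        { toFun := fun φ => ψ.trans φ
          invFun := fun φ => ψ.symm.trans φ
          left_inv := fun φ => by ext x; simp
          right_inv := fun φ => by ext x; simp }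
      exact (Finset.sum_congr rfl (fun φ _ => rfl)).trans
        (Equiv.sum_comp e (fun φ => E (φ i) (φ j)))
    obtain ⟨γ, hγdef⟩ : ∃ x : ℝ, x = Eb u₀ u₀ := ⟨_, rfl⟩
    obtain ⟨α, hαdef⟩ : ∃ x : ℝ, x = Eb u₀ w₀ := ⟨_, rfl⟩
    obtain ⟨β, hβdef⟩ : ∃ x : ℝ, x = Eb u₀ v₀ := ⟨_, rfl⟩
    have hγ0 : 0 ≤ γ := hγdef ▸ hEbnn u₀ u₀
    have hα0 : 0 ≤ α := hαdef ▸ hEbnn u₀ w₀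
    have hβ0 : 0 ≤ β := hβdef ▸ hEbnn u₀ v₀
    have hEbeq : Eb = γ • (1 : Matrix (Fin n) (Fin n) ℝ) + α • A + β • Gᶜ.adjMatrix ℝ := by
      ext i j
      simp only [Matrix.add_apply, Matrix.smul_apply, Matrix.one_apply, hAdef,
        SimpleGraph.adjMatrix_apply, SimpleGraph.compl_adj, smul_eq_mul]
      by_cases hij : i = j
      · subst hij
        obtain ⟨wi, hwi⟩ := hne i
        have hadji : G.Adj i wi := by rwa [SimpleGraph.mem_neighborFinset] at hwi
        obtain ⟨ψ, hψ1, _⟩ := hrank3 u₀ w₀ i wi (G.ne_of_adj hadj₀) (G.ne_of_adj hadji)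
          (iff_of_true hadj₀ hadji)
        have hval := hEbinv ψ u₀ u₀
        rw [hψ1] at hval
        simp [G.loopless.irrefl i, hval, ← hγdef]
      · by_cases hadj : G.Adj i j
        · obtain ⟨ψ, hψ1, hψ2⟩ := hrank3 u₀ w₀ i j (G.ne_of_adj hadj₀) hij
            (iff_of_true hadj₀ hadj)
          have hval := hEbinv ψ u₀ w₀
          rw [hψ1, hψ2] at hval
          simp [hij, hadj, hval, ← hαdef]
        · obtain ⟨ψ, hψ1, hψ2⟩ := hrank3 u₀ v₀ i j huv0 hij (iff_of_false hnadj0 hadj)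
          have hval := hEbinv ψ u₀ v₀
          rw [hψ1, hψ2] at hval
          simp [hij, hadj, hval, ← hβdef]
    have hPbφ : Pb = (β - γ) • (1 : Matrix (Fin n) (Fin n) ℝ) + (β - t - α) • A
        + (1 - β) • Jm := by
      have h := eq_sub_of_add_eq hsum
      rw [h, hEbeq, hCm]
      module
    have hPbF1 : Pb * F1 = ((β - γ) + (β - t - α) * r) • F1 := by
      rw [hPbφ, hF1def]
      simp only [Matrix.add_mul, Matrix.mul_add, Matrix.smul_mul, Matrix.mul_smul,
        Matrix.one_mul, Matrix.mul_one, hA2, hAJ, hJA, hJJ, smul_add, smul_smul]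
      match_scalars <;>
        first
          | ring1
          | linear_combination ((β - t - α) * Nn) * R2
          | linear_combination (β - t - α) * R3
          | linear_combination (-(β - t - α) * Nn) * hsdef
    have hkey1 := psd_trace_nonneg' (hPbpsd.conjTranspose_mul_mul_same F1)
    rw [conjT_eq_of_symm hF1sym, Matrix.mul_assoc, hPbF1, Matrix.mul_smul, hF1idem,
      smul_smul, Matrix.trace_smul, htrF1, smul_eq_mul] at hkey1
    have hfpos : 0 < (Nn * (r - s)) * (Nn * (-s * (Nn - 1) - K)) := by
      have h1 : (0:ℝ) ≤ (-s - 1) * (Nn - 1) := mul_nonneg (by linarith) (by linarith)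
      have h2 : (0:ℝ) < -s * (Nn - 1) - K := by linarith
      exact mul_pos (mul_pos hNn0 hrspos) (mul_pos hNn0 h2)
    have hlam1 : 0 ≤ (β - γ) + (β - t - α) * r := by
      by_contra hneg
      push_neg at hneg
      have hx := mul_neg_of_neg_of_pos hneg hfpos
      linarith [hkey1, hx]
    -- all-ones vector inequality
    have hones := hPbpsd.dotProduct_mulVec_nonneg (fun _ => (1:ℝ))
    have hstar : star (fun _ : Fin n => (1:ℝ)) = (fun _ : Fin n => (1:ℝ)) := by
      ext i; simp
    rw [hstar, hPbφ] at hones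
    have hAones : A *ᵥ (fun _ => (1:ℝ)) = (fun _ => K) := by
      ext w
      rw [hAdef]
      simp only [SimpleGraph.adjMatrix_mulVec_apply]
      rw [Finset.sum_const, hdeg w, hKdef]
      simp
    have hJones : Jm *ᵥ (fun _ => (1:ℝ)) = (fun _ => Nn) := by
      ext w
      rw [hJmdef, hNndef]
      simp [Matrix.mulVec, dotProduct]
    have h2 : 0 ≤ Nn * ((β - γ) + (β - t - α) * K + (1 - β) * Nn) := by
      rw [Matrix.add_mulVec, Matrix.add_mulVec, smul_mulVec, smul_mulVec,
        smul_mulVec, Matrix.one_mulVec, hAones, hJones] at hones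
      have : ∀ x y z : ℝ,
          (fun _ : Fin n => (1:ℝ)) ⬝ᵥ (x • (fun _ : Fin n => (1:ℝ)) + y • (fun _ : Fin n => K)
            + z • (fun _ : Fin n => Nn)) = Nn * (x + y * K + z * Nn) := by
        intro x y z
        simp only [dotProduct, Pi.add_apply, Pi.smul_apply, smul_eq_mul, one_mul]
        rw [Finset.sum_const, Finset.card_univ, Fintype.card_fin, nsmul_eq_mul, hNndef]
        ring
      rw [this] at hones
      exact hones
    have h2s : 0 ≤ (β - γ) + (β - t - α) * K + (1 - β) * Nn := by
      by_contra hneg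
      push_neg at hneg
      have hx := mul_neg_of_pos_of_neg hNn0 hneg
      linarith [h2, hx]
    linarith [mul_nonneg (by linarith : (0:ℝ) ≤ 1 + r) h2s,
      mul_nonneg (by linarith : (0:ℝ) ≤ Nn - 1 - K) hlam1,
      mul_nonneg hγ0 (by linarith : (0:ℝ) ≤ Nn - K + r),
      mul_nonneg hα0 hq0.le]
  -- membership of the optimal value
  have hmem : SPN (Jm - (Nn * (r + 1) / (r * (Nn - 1) + K)) • A) := by
    refine ⟨(r * (Nn - 1) + K)⁻¹ • F2, (r * Nn / (r * (Nn - 1) + K)) • Gᶜ.adjMatrix ℝ,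
      ?_, ?_, ?_, ?_⟩
    · rw [hCm, hF2def]
      match_scalars <;> field_simp <;> ring
    · exact psd_smul' (inv_nonneg.mpr hq0.le) hF2psd
    · show _ᵀ = _
      rw [Matrix.transpose_smul, hCm, Matrix.transpose_sub, Matrix.transpose_sub,
        Matrix.transpose_one, hJsym, hAsym]
    · intro i j
      simp only [Matrix.smul_apply, smul_eq_mul]
      apply mul_nonneg (by positivity)
      by_cases h : Gᶜ.Adj i j <;> simp [h]
  -- conclusion
  have hub' : ∀ x ∈ {t : ℝ | SPN (Jm - t • A)}, x ≤ Nn * (r + 1) / (r * (Nn - 1) + K) := by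
    intro x hx
    rw [le_div_iff₀ hq0]
    exact hub x hx
  exact le_antisymm
    (csSup_le ⟨Nn * (r + 1) / (r * (Nn - 1) + K), hmem⟩ hub')
    (le_csSup ⟨Nn * (r + 1) / (r * (Nn - 1) + K), hub'⟩ hmem)




end
end
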